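/- arXiv:2310.17513 — 6 statements merged into one kernel-verified Lean document; each statement's English description precedes it below -/
import Mathlib

section
/- Let D, L ≥ 1, let W_1, …, W_L and ΔW_1, …, ΔW_L be real D×D matrices, and let R_1, …, R_L be nonnegative integers with rank(ΔW_l) ≤ R_l for every l ∈ {1, …, L}. Then rank(∏_{l=1}^{L}(W_l + ΔW_l) − ∏_{l=1}^{L} W_l) ≤ Σ_{l=1}^{L} R_l. -/
open Matrix Finset

noncomputable section

/-- Ordered matrix product `W_b * W_{b-1} * ⋯ * W_a` (larger indices on the
left); the identity matrix when `a > b`. -/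
def mprod {D : ℕ} (W : ℕ → Matrix (Fin D) (Fin D) ℝ) (a b : ℕ) :
    Matrix (Fin D) (Fin D) ℝ :=
  (((List.range' a (b + 1 - a)).map W).reverse).prod

lemma mprod_succ {D : ℕ} (W : ℕ → Matrix (Fin D) (Fin D) ℝ) (L : ℕ) :
    mprod W 1 (L + 1) = W (L + 1) * mprod W 1 L := by
  simp only [mprod, Nat.add_sub_cancel]
  rw [List.range'_concat, List.map_append, List.reverse_append]
  simp [Nat.add_comm 1 L]

lemma matrix_rank_add_le {D : ℕ} (A B : Matrix (Fin D) (Fin D) ℝ) :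
    (A + B).rank ≤ A.rank + B.rank := by
  rw [Matrix.rank, Matrix.rank, Matrix.rank]
  have h : LinearMap.range (A + B).mulVecLin ≤
      LinearMap.range A.mulVecLin ⊔ LinearMap.range B.mulVecLin := by
    rintro x ⟨v, rfl⟩
    rw [Matrix.mulVecLin_add]
    exact Submodule.add_mem_sup ⟨v, rfl⟩ ⟨v, rfl⟩
  exact (Submodule.finrank_mono h).trans
    (Submodule.finrank_add_le_finrank_add_finrank _ _)

lemma aux {D : ℕ} (W ΔW : ℕ → Matrix (Fin D) (Fin D) ℝ) (R : ℕ → ℕ) (L : ℕ)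
    (hrank : ∀ l ∈ Finset.Icc 1 L, (ΔW l).rank ≤ R l) :
    (mprod (fun l => W l + ΔW l) 1 L - mprod W 1 L).rank ≤
      ∑ l ∈ Finset.Icc 1 L, R l := by
  induction L with
  | zero => simp [mprod]
  | succ n ih =>
    have hrank' : ∀ l ∈ Finset.Icc 1 n, (ΔW l).rank ≤ R l := by
      intro l hl
      exact hrank l (Finset.mem_Icc.mpr ⟨(Finset.mem_Icc.mp hl).1,
        le_trans (Finset.mem_Icc.mp hl).2 (Nat.le_succ n)⟩)
    have key : mprod (fun l => W l + ΔW l) 1 (n + 1) - mprod W 1 (n + 1)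
        = (W (n + 1) + ΔW (n + 1)) *
            (mprod (fun l => W l + ΔW l) 1 n - mprod W 1 n)
          + ΔW (n + 1) * mprod W 1 n := by
      rw [mprod_succ, mprod_succ]
      noncomm_ring
    rw [key, Finset.sum_Icc_succ_top (by omega)]
    calc ((W (n + 1) + ΔW (n + 1)) *
            (mprod (fun l => W l + ΔW l) 1 n - mprod W 1 n)
          + ΔW (n + 1) * mprod W 1 n).rank
        ≤ ((W (n + 1) + ΔW (n + 1)) *
            (mprod (fun l => W l + ΔW l) 1 n - mprod W 1 n)).rank
          + (ΔW (n + 1) * mprod W 1 n).rank := matrix_rank_add_le _ _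
      _ ≤ (mprod (fun l => W l + ΔW l) 1 n - mprod W 1 n).rank
          + (ΔW (n + 1)).rank :=
          Nat.add_le_add (Matrix.rank_mul_le_right _ _) (Matrix.rank_mul_le_left _ _)
      _ ≤ (∑ l ∈ Finset.Icc 1 n, R l) + R (n + 1) :=
          Nat.add_le_add (ih hrank')
            (hrank (n + 1) (Finset.mem_Icc.mpr ⟨by omega, le_refl _⟩))

/-- **Rank bound for the difference of products.**
If `rank(ΔW_l) ≤ R_l` for every `l ∈ {1, …, L}`, then
`rank(∏_{l=1}^{L}(W_l + ΔW_l) − ∏_{l=1}^{L} W_l) ≤ Σ_{l=1}^{L} R_l`. -/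
theorem rank_product_difference_le (D L : ℕ) (hD : 1 ≤ D) (hL : 1 ≤ L)
    (W ΔW : ℕ → Matrix (Fin D) (Fin D) ℝ) (R : ℕ → ℕ)
    (hrank : ∀ l ∈ Finset.Icc 1 L, (ΔW l).rank ≤ R l) :
    (mprod (fun l => W l + ΔW l) 1 L - mprod W 1 L).rank ≤
      ∑ l ∈ Finset.Icc 1 L, R l :=
  aux W ΔW R L hrank

end
end

section
/- Let W̄, W_1, …, W_L ∈ ℝ^{D×D}, set E := W̄ − ∏_{l=1}^{L} W_l and e := rank(E), and fix R ∈ {1, …, D}. Assume W_1, …, W_L are non-singular and that ∏_{l=1}^{L} W_l + α_r(E) is non-singular for every integer 0 ≤ r ≤ R(L−1). Then there exist matrices ΔW_1, …, ΔW_L ∈ ℝ^{D×D}, each of rank at most R, such that ∏_{l=1}^{L}(W_l + ΔW_l) = ∏_{l=1}^{L} W_l + α_{min(RL, e)}(E). In particular, if R ≥ ⌈e/L⌉ then ∏_{l=1}^{L}(W_l + ΔW_l) = W̄. -/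
open Matrix Finset

noncomputable section

/-- A singular value decomposition of a square real matrix: `W = U Σ Vᵀ` with
`U, V` orthogonal and singular values in descending order, recorded 0-indexed
(`σ 0` is the paper's `σ_1`) and extended by zero from index `D` on. -/
structure SVD {D : ℕ} (W : Matrix (Fin D) (Fin D) ℝ) where
  U : Matrix (Fin D) (Fin D) ℝ
  V : Matrix (Fin D) (Fin D) ℝ
  σ : ℕ → ℝ
  hU : Uᵀ * U = 1
  hV : Vᵀ * V = 1
  nonneg : ∀ i, 0 ≤ σ i
  anti : ∀ i j, i ≤ j → σ j ≤ σ i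
  tail_zero : ∀ i, D ≤ i → σ i = 0
  decomp : W = U * Matrix.diagonal (fun i : Fin D => σ i) * Vᵀ

/-- `s.trunc r` is the best rank-`r` approximation `α_r(W)` obtained by
truncating the singular value decomposition `s` of `W` to its `r` largest
singular values. -/
def SVD.trunc {D : ℕ} {W : Matrix (Fin D) (Fin D) ℝ} (s : SVD W) (r : ℕ) :
    Matrix (Fin D) (Fin D) ℝ :=
  s.U * Matrix.diagonal (fun i : Fin D => if (i : ℕ) < r then s.σ i else 0) * s.Vᵀ

lemma mprod_nil {D : ℕ} (W : ℕ → Matrix (Fin D) (Fin D) ℝ) {a b : ℕ}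
    (h : b + 1 ≤ a) : mprod W a b = 1 := by
  unfold mprod
  have : b + 1 - a = 0 := by omega
  simp [this]

lemma mprod_concat {D : ℕ} (W : ℕ → Matrix (Fin D) (Fin D) ℝ) {a b : ℕ}
    (h : a ≤ b + 1) : mprod W a (b + 1) = W (b + 1) * mprod W a b := by
  unfold mprod
  have h1 : b + 1 + 1 - a = (b + 1 - a) + 1 := by omega
  rw [h1, List.range'_concat]
  have h2 : a + (b + 1 - a) = b + 1 := by omega
  simp [h2]

lemma mprod_cons {D : ℕ} (W : ℕ → Matrix (Fin D) (Fin D) ℝ) {a b : ℕ}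
    (h : a ≤ b) : mprod W a b = mprod W (a + 1) b * W a := by
  unfold mprod
  have h1 : b + 1 - a = (b - a) + 1 := by omega
  have h2 : b + 1 - (a + 1) = b - a := by omega
  rw [h1, List.range'_succ, h2]
  simp

lemma mprod_det_ne {D : ℕ} (W : ℕ → Matrix (Fin D) (Fin D) ℝ) (a : ℕ) :
    ∀ b, (∀ k, a ≤ k → k ≤ b → (W k).det ≠ 0) → (mprod W a b).det ≠ 0 := by
  intro b
  induction b with
  | zero =>
    intro h
    by_cases hab : a = 0
    · subst hab
      unfold mprod
      simp
      exact h 0 le_rfl le_rfl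
    · rw [mprod_nil W (by omega)]
      simp
  | succ b ih =>
    intro h
    by_cases hab : a ≤ b + 1
    · rw [mprod_concat W hab, Matrix.det_mul]
      exact mul_ne_zero (h (b + 1) hab le_rfl)
        (ih fun k hk1 hk2 => h k hk1 (by omega))
    · rw [mprod_nil W (by omega)]
      simp

/-- The diagonal of singular values recovered from the SVD. -/
lemma SVD.diag_eq {D : ℕ} {E : Matrix (Fin D) (Fin D) ℝ} (s : SVD E) :
    Matrix.diagonal (fun i : Fin D => s.σ (i : ℕ)) = s.Uᵀ * E * s.V := by
  obtain ⟨U, V, σ, hU, hV, hnn, ha, ht, hdec⟩ := s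
  dsimp only
  rw [hdec]
  symm
  calc Uᵀ * (U * Matrix.diagonal (fun i : Fin D => σ (i : ℕ)) * Vᵀ) * V
      = (Uᵀ * U) * Matrix.diagonal (fun i : Fin D => σ (i : ℕ)) * (Vᵀ * V) := by
        simp only [Matrix.mul_assoc]
    _ = Matrix.diagonal (fun i : Fin D => σ (i : ℕ)) := by
        rw [hU, hV, Matrix.one_mul, Matrix.mul_one]

/-- A truncation keeping all nonzero singular values recovers the matrix. -/
lemma SVD.trunc_eq {D : ℕ} {E : Matrix (Fin D) (Fin D) ℝ} (s : SVD E) (r : ℕ)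
    (h : ∀ i : ℕ, r ≤ i → s.σ i = 0) : s.trunc r = E := by
  obtain ⟨U, V, σ, hU, hV, hnn, ha, ht, hdec⟩ := s
  dsimp only [SVD.trunc] at h ⊢
  have hfun : (fun i : Fin D => if (i : ℕ) < r then σ (i : ℕ) else 0) =
      fun i : Fin D => σ (i : ℕ) := by
    funext i
    by_cases hi : (i : ℕ) < r
    · simp [hi]
    · simp only [hi, if_false]
      exact (h i (by omega)).symm
  rw [hfun, hdec]

/-- The rank of a difference of two SVD truncations is at most the difference
of the truncation ranks. -/
lemma trunc_sub_rank {D : ℕ} {E : Matrix (Fin D) (Fin D) ℝ} (s : SVD E)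
    (r1 r2 : ℕ) (h : r1 ≤ r2) :
    (s.trunc r2 - s.trunc r1).rank ≤ r2 - r1 := by
  classical
  set d : Fin D → ℝ := fun i =>
    (if (i : ℕ) < r2 then s.σ i else 0) - (if (i : ℕ) < r1 then s.σ i else 0)
    with hd
  have hdiff : s.trunc r2 - s.trunc r1 = s.U * Matrix.diagonal d * s.Vᵀ := by
    rw [hd]
    simp only [SVD.trunc, ← Matrix.diagonal_sub, Matrix.mul_sub, Matrix.sub_mul]
  rw [hdiff]
  refine le_trans (le_trans (Matrix.rank_mul_le_left _ _)
    (Matrix.rank_mul_le_right _ _)) ?_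
  rw [Matrix.rank_diagonal]
  rw [Fintype.card_subtype]
  have hsub : Finset.univ.filter (fun i : Fin D => d i ≠ 0) ⊆
      Finset.univ.filter (fun i : Fin D => r1 ≤ (i : ℕ) ∧ (i : ℕ) < r2) := by
    intro i hi
    simp only [Finset.mem_filter, Finset.mem_univ, true_and] at hi ⊢
    by_contra hcon
    apply hi
    rw [hd]
    simp only
    by_cases h1 : (i : ℕ) < r1
    · have h2 : (i : ℕ) < r2 := lt_of_lt_of_le h1 h
      simp [h1, h2]
    · have h2 : ¬ (i : ℕ) < r2 := by
        intro h2; exact hcon ⟨by omega, h2⟩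
      simp [h1, h2]
  refine le_trans (Finset.card_le_card hsub) ?_
  refine le_trans (Finset.card_le_card_of_injOn (fun i : Fin D => (i : ℕ))
    ?_ ?_) (le_of_eq (Nat.card_Ico r1 r2))
  · intro i hi
    simp only [Finset.mem_coe, Finset.mem_filter, Finset.mem_univ, true_and] at hi
    simp [Finset.mem_Ico, hi.1, hi.2]
  · exact Fin.val_injective.injOn

/-- **Exact linear-model approximation via LoRA (Lemma 1, exactness part).**
Under the stated non-singularity assumptions there are adapters
`ΔW_1, …, ΔW_L` of rank at most `R` with
`∏_{l=1}^{L}(W_l + ΔW_l) = ∏_{l=1}^{L} W_l + α_{min(RL,e)}(E)`;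
in particular `∏_{l=1}^{L}(W_l + ΔW_l) = W̄` whenever `R ≥ ⌈e/L⌉`. -/
theorem lora_linear_exact (D L : ℕ) (hD : 1 ≤ D) (hL : 1 ≤ L)
    (Wbar : Matrix (Fin D) (Fin D) ℝ) (W : ℕ → Matrix (Fin D) (Fin D) ℝ)
    (E : Matrix (Fin D) (Fin D) ℝ) (hE : E = Wbar - mprod W 1 L)
    (e : ℕ) (he : e = E.rank)
    (R : ℕ) (hR1 : 1 ≤ R) (hRD : R ≤ D)
    (sE : SVD E)
    (hWns : ∀ l ∈ Finset.Icc 1 L, (W l).det ≠ 0)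
    (hns : ∀ r ≤ R * (L - 1), (mprod W 1 L + sE.trunc r).det ≠ 0) :
    ∃ ΔW : ℕ → Matrix (Fin D) (Fin D) ℝ,
      (∀ l ∈ Finset.Icc 1 L, (ΔW l).rank ≤ R) ∧
      mprod (fun l => W l + ΔW l) 1 L = mprod W 1 L + sE.trunc (min (R * L) e) ∧
      ((e + L - 1) / L ≤ R → mprod (fun l => W l + ΔW l) 1 L = Wbar) := by
  classical
  set P : Matrix (Fin D) (Fin D) ℝ := mprod W 1 L with hPdef
  -- σ vanishes from index e on
  have hcount : Fintype.card {i : Fin D // sE.σ (i : ℕ) ≠ 0} ≤ e := by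
    have hdiag := sE.diag_eq
    rw [he]
    calc Fintype.card {i : Fin D // sE.σ (i : ℕ) ≠ 0}
        = (Matrix.diagonal (fun i : Fin D => sE.σ (i : ℕ))).rank := by
          rw [Matrix.rank_diagonal]
      _ ≤ E.rank := by
          rw [hdiag]
          exact le_trans (Matrix.rank_mul_le_left _ _) (Matrix.rank_mul_le_right _ _)
  have hσe : ∀ i : ℕ, e ≤ i → sE.σ i = 0 := by
    intro i hi
    by_contra hne
    have hiD : i < D := by
      by_contra hcon
      exact hne (sE.tail_zero i (by omega))
    have hpos : ∀ j : ℕ, j ≤ i → sE.σ j ≠ 0 := by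
      intro j hj
      have h1 : 0 < sE.σ i := lt_of_le_of_ne (sE.nonneg i) (Ne.symm hne)
      have h2 := sE.anti j i hj
      intro h0; rw [h0] at h2; linarith
    have hcard : i + 1 ≤ Fintype.card {k : Fin D // sE.σ (k : ℕ) ≠ 0} := by
      rw [Fintype.card_subtype]
      have himg : (Finset.univ.filter (fun k : Fin D => (k : ℕ) ≤ i)).image
          (fun k : Fin D => (k : ℕ)) = Finset.range (i + 1) := by
        ext n
        simp only [Finset.mem_image, Finset.mem_filter, Finset.mem_univ, true_and,
          Finset.mem_range]
        constructor
        · rintro ⟨k, hk, rfl⟩; omega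
        · intro hn; exact ⟨⟨n, by omega⟩, by simp; omega, rfl⟩
      have h1 : (Finset.univ.filter (fun k : Fin D => (k : ℕ) ≤ i)).card = i + 1 := by
        rw [← Finset.card_range (i + 1), ← himg,
          Finset.card_image_of_injective _ Fin.val_injective]
      rw [← h1]
      apply Finset.card_le_card
      intro k hk
      simp only [Finset.mem_filter, Finset.mem_univ, true_and] at hk ⊢
      exact hpos k hk
    omega
  have htruncE : ∀ r, e ≤ r → sE.trunc r = E := by
    intro r hr
    exact sE.trunc_eq r fun i hi => hσe i (by omega)
  -- setup
  set rk : ℕ → ℕ := fun l => min (R * l) e with hrk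
  set S : ℕ → Matrix (Fin D) (Fin D) ℝ := fun l => sE.trunc (rk l) with hS
  set C : ℕ → Matrix (Fin D) (Fin D) ℝ := fun l => mprod W (l + 1) L with hC
  have hCdet : ∀ l, IsUnit (C l).det := by
    intro l
    rw [isUnit_iff_ne_zero]
    exact mprod_det_ne W (l + 1) L fun k hk1 hk2 =>
      hWns k (Finset.mem_Icc.mpr ⟨by omega, hk2⟩)
  have hPdet : IsUnit P.det := by
    rw [isUnit_iff_ne_zero]
    exact mprod_det_ne W 1 L fun k hk1 hk2 => hWns k (Finset.mem_Icc.mpr ⟨hk1, hk2⟩)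
  have hCstep : ∀ l, l + 1 ≤ L → C l = C (l + 1) * W (l + 1) := by
    intro l hl
    exact mprod_cons W hl
  have hCL : C L = 1 := mprod_nil W le_rfl
  have hS0 : S 0 = 0 := by
    rw [hS]
    simp only [hrk]
    unfold SVD.trunc
    have : (fun i : Fin D => if (i : ℕ) < min (R * 0) e then sE.σ (i:ℕ) else 0) =
        fun _ : Fin D => (0 : ℝ) := by
      funext i; simp
    rw [this]
    simp
  have hSdet : ∀ l, l ≤ L - 1 → IsUnit (P + S l).det := by
    intro l hl
    rw [isUnit_iff_ne_zero]
    apply hns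
    calc rk l ≤ R * l := min_le_left _ _
      _ ≤ R * (L - 1) := Nat.mul_le_mul_left R hl
  -- the adapters
  set ΔW : ℕ → Matrix (Fin D) (Fin D) ℝ := fun l =>
    (C l)⁻¹ * (S l - S (l - 1)) * (P + S (l - 1))⁻¹ * C (l - 1) with hΔW
  -- key induction
  have key : ∀ l, l ≤ L →
      mprod (fun k => W k + ΔW k) 1 l = (C l)⁻¹ * (P + S l) := by
    intro l
    induction l with
    | zero =>
      intro _
      rw [mprod_nil _ (by omega)]
      have hC0 : C 0 = P := rfl
      rw [hS0, hC0, add_zero, Matrix.nonsing_inv_mul P hPdet]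
    | succ l ih =>
      intro hl
      rw [mprod_concat _ (by omega), ih (by omega)]
      have hWd : IsUnit (W (l + 1)).det := by
        rw [isUnit_iff_ne_zero]
        exact hWns (l + 1) (Finset.mem_Icc.mpr ⟨by omega, hl⟩)
      have hXd : IsUnit (P + S l).det := hSdet l (by omega)
      have hCrec : (C l)⁻¹ = (W (l + 1))⁻¹ * (C (l + 1))⁻¹ := by
        rw [hCstep l hl, Matrix.mul_inv_rev]
      have hΔWl : ΔW (l + 1) =
          (C (l + 1))⁻¹ * (S (l + 1) - S l) * (P + S l)⁻¹ * C l := by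
        rw [hΔW]; simp
      calc (W (l + 1) + ΔW (l + 1)) * ((C l)⁻¹ * (P + S l))
          = W (l + 1) * ((C l)⁻¹ * (P + S l)) +
            (C (l + 1))⁻¹ * (S (l + 1) - S l) * (P + S l)⁻¹ * C l *
              ((C l)⁻¹ * (P + S l)) := by rw [hΔWl, add_mul]
        _ = (C (l + 1))⁻¹ * (P + S l) + (C (l + 1))⁻¹ * (S (l + 1) - S l) := by
            congr 1
            · rw [hCrec]
              simp only [Matrix.mul_assoc]
              rw [Matrix.mul_nonsing_inv_cancel_left _ _ hWd]
            · simp only [Matrix.mul_assoc]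
              rw [Matrix.mul_nonsing_inv_cancel_left _ _ (hCdet l),
                Matrix.nonsing_inv_mul _ hXd, Matrix.mul_one]
        _ = (C (l + 1))⁻¹ * (P + S (l + 1)) := by
            rw [← Matrix.mul_add]
            congr 1
            abel
  have hmain : mprod (fun k => W k + ΔW k) 1 L = P + sE.trunc (min (R * L) e) := by
    rw [key L le_rfl, hCL, inv_one, Matrix.one_mul]
  refine ⟨ΔW, ?_, hmain, ?_⟩
  · -- rank bound
    intro l hl
    rw [Finset.mem_Icc] at hl
    obtain ⟨m, rfl⟩ : ∃ m, l = m + 1 := ⟨l - 1, by omega⟩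
    have h1 : (ΔW (m + 1)).rank ≤ (S (m + 1) - S m).rank := by
      rw [hΔW]
      simp only [Nat.add_sub_cancel]
      exact le_trans (Matrix.rank_mul_le_left _ _)
        (le_trans (Matrix.rank_mul_le_left _ _) (Matrix.rank_mul_le_right _ _))
    have hle : rk m ≤ rk (m + 1) := by
      simp only [hrk]
      have : R * m ≤ R * (m + 1) := Nat.mul_le_mul_left R (by omega)
      omega
    have h2 : (S (m + 1) - S m).rank ≤ rk (m + 1) - rk m :=
      trunc_sub_rank sE (rk m) (rk (m + 1)) hle
    have h3 : rk (m + 1) - rk m ≤ R := by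
      simp only [hrk]
      have hms : R * (m + 1) = R * m + R := by ring
      rw [hms]
      omega
    omega
  · -- exactness when R ≥ ⌈e/L⌉
    intro hdiv
    have he' : e ≤ R * L := by
      have h1 := Nat.div_add_mod (e + L - 1) L
      have h2 : (e + L - 1) % L < L := Nat.mod_lt _ (by omega)
      have h4 : L * ((e + L - 1) / L) ≤ L * R := Nat.mul_le_mul_left L hdiv
      obtain ⟨t, ht⟩ : ∃ t, L * ((e + L - 1) / L) = t := ⟨_, rfl⟩
      rw [ht] at h1 h4
      obtain ⟨u, hu⟩ : ∃ u, L * R = u := ⟨_, rfl⟩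
      rw [hu] at h4
      calc e ≤ t := by omega
        _ ≤ u := h4
        _ = R * L := by rw [← hu, mul_comm]
    have hmin : min (R * L) e = e := min_eq_right he'
    rw [hmain, hmin, htruncE e le_rfl, hE]
    abel

end
end

section
/- Let W̄, W_1, …, W_L ∈ ℝ^{D×D}, set E := W̄ − ∏_{l=1}^{L} W_l and e := rank(E), and let R_1, …, R_L be nonnegative integers. Assume W_1, …, W_L are non-singular and that ∏_{l=1}^{L} W_l + α_r(E) is non-singular for every integer 0 ≤ r ≤ Σ_{l=1}^{L−1} R_l. Then the minimum of ‖∏_{l=1}^{L}(W_l + ΔW_l) − W̄‖₂ over all ΔW_1, …, ΔW_L with rank(ΔW_l) ≤ R_l for every l equals σ_{(Σ_{l=1}^{L} R_l)+1}(E), and it is attained by adapters satisfying ∏_{l=1}^{L}(W_l + ΔW_l) = ∏_{l=1}^{L} W_l + α_{min(Σ_{l=1}^{L} R_l, e)}(E). In particular, if Σ_{l=1}^{L} R_l ≥ e then there exist such adapters with ∏_{l=1}^{L}(W_l + ΔW_l) = W̄. -/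
open Matrix Finset

noncomputable section

/-- Euclidean norm of a vector in `ℝ^D`. -/
def vnorm {D : ℕ} (x : Fin D → ℝ) : ℝ := Real.sqrt (∑ i, x i ^ 2)

/-- Spectral (operator 2-) norm of a matrix: the supremum of `‖A x‖₂` over the
Euclidean unit ball. -/
def matrixSpectralNorm {D : ℕ} (A : Matrix (Fin D) (Fin D) ℝ) : ℝ :=
  sSup {c : ℝ | ∃ x : Fin D → ℝ, vnorm x ≤ 1 ∧ c = vnorm (A.mulVec x)}

namespace LoraAux

variable {D : ℕ}

lemma vnorm_nonneg (x : Fin D → ℝ) : 0 ≤ vnorm x := Real.sqrt_nonneg _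

lemma vnorm_sq (x : Fin D → ℝ) : vnorm x ^ 2 = ∑ i, x i ^ 2 :=
  Real.sq_sqrt (Finset.sum_nonneg fun _ _ => sq_nonneg _)

lemma vnorm_zero : vnorm (0 : Fin D → ℝ) = 0 := by simp [vnorm]

lemma vnorm_pos {x : Fin D → ℝ} (hx : x ≠ 0) : 0 < vnorm x := by
  rcases (vnorm_nonneg x).lt_or_eq with h | h
  · exact h
  · exfalso
    apply hx
    have h2 : ∑ i, x i ^ 2 = 0 := by
      rw [← vnorm_sq x, ← h]; ring
    funext i
    have := (Finset.sum_eq_zero_iff_of_nonneg (fun i _ => sq_nonneg (x i))).mp h2 i (mem_univ i)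
    exact pow_eq_zero_iff (n := 2) (by norm_num) |>.mp this

lemma vnorm_smul (a : ℝ) (x : Fin D → ℝ) : vnorm (a • x) = |a| * vnorm x := by
  unfold vnorm
  have h : ∑ i, (a • x) i ^ 2 = a ^ 2 * ∑ i, x i ^ 2 := by
    rw [Finset.mul_sum]; apply Finset.sum_congr rfl; intro i _
    simp [mul_pow]
  rw [h, Real.sqrt_mul (sq_nonneg a), Real.sqrt_sq_eq_abs]

lemma vnorm_neg (x : Fin D → ℝ) : vnorm (-x) = vnorm x := by
  unfold vnorm; congr 1; apply Finset.sum_congr rfl; intros; simp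

lemma abs_le_vnorm (x : Fin D → ℝ) (j : Fin D) : |x j| ≤ vnorm x := by
  rw [← Real.sqrt_sq_eq_abs]
  exact Real.sqrt_le_sqrt (Finset.single_le_sum (f := fun i => x i ^ 2)
    (fun i _ => sq_nonneg _) (mem_univ j))

lemma sum_sq_eq_dot (z : Fin D → ℝ) : ∑ i, z i ^ 2 = z ⬝ᵥ z := by
  simp [dotProduct, sq]

lemma vnorm_mulVec_orth {U : Matrix (Fin D) (Fin D) ℝ} (hU : Uᵀ * U = 1) (y : Fin D → ℝ) :
    vnorm (U.mulVec y) = vnorm y := by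
  unfold vnorm
  congr 1
  rw [sum_sq_eq_dot, sum_sq_eq_dot, Matrix.dotProduct_mulVec, ← Matrix.mulVec_transpose,
    Matrix.mulVec_mulVec, hU, Matrix.one_mulVec]

lemma vnorm_diag_le {d : Fin D → ℝ} {c : ℝ} (hc : 0 ≤ c) (hd : ∀ i, |d i| ≤ c)
    (z : Fin D → ℝ) : vnorm ((Matrix.diagonal d).mulVec z) ≤ c * vnorm z := by
  unfold vnorm
  rw [← Real.sqrt_sq hc, ← Real.sqrt_mul (sq_nonneg c)]
  apply Real.sqrt_le_sqrt
  rw [Finset.mul_sum]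
  apply Finset.sum_le_sum
  intro i _
  rw [Matrix.mulVec_diagonal, mul_pow]
  have h1 : d i ^ 2 ≤ c ^ 2 := by
    have := hd i
    nlinarith [abs_nonneg (d i), sq_abs (d i)]
  nlinarith [sq_nonneg (z i)]

lemma mem_snSet_zero (A : Matrix (Fin D) (Fin D) ℝ) :
    (0 : ℝ) ∈ {c : ℝ | ∃ x : Fin D → ℝ, vnorm x ≤ 1 ∧ c = vnorm (A.mulVec x)} := by
  refine ⟨0, ?_, ?_⟩
  · rw [vnorm_zero]; norm_num
  · rw [Matrix.mulVec_zero, vnorm_zero]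

lemma snSet_bddAbove (A : Matrix (Fin D) (Fin D) ℝ) :
    BddAbove {c : ℝ | ∃ x : Fin D → ℝ, vnorm x ≤ 1 ∧ c = vnorm (A.mulVec x)} := by
  refine ⟨Real.sqrt (∑ i, (∑ j, |A i j|) ^ 2), ?_⟩
  rintro c ⟨x, hx, rfl⟩
  unfold vnorm
  apply Real.sqrt_le_sqrt
  apply Finset.sum_le_sum
  intro i _
  have h1 : |A.mulVec x i| ≤ ∑ j, |A i j| := by
    calc |A.mulVec x i| = |∑ j, A i j * x j| := by rw [Matrix.mulVec, dotProduct]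
      _ ≤ ∑ j, |A i j * x j| := Finset.abs_sum_le_sum_abs _ _
      _ ≤ ∑ j, |A i j| := by
          apply Finset.sum_le_sum
          intro j _
          rw [abs_mul]
          calc |A i j| * |x j| ≤ |A i j| * 1 :=
                mul_le_mul_of_nonneg_left ((abs_le_vnorm x j).trans hx) (abs_nonneg _)
            _ = |A i j| := mul_one _
  calc A.mulVec x i ^ 2 = |A.mulVec x i| ^ 2 := (sq_abs _).symm
    _ ≤ (∑ j, |A i j|) ^ 2 := by
        apply pow_le_pow_left₀ (abs_nonneg _) h1

lemma le_spectralNorm {A : Matrix (Fin D) (Fin D) ℝ} {x : Fin D → ℝ} (hx : vnorm x ≤ 1) :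
    vnorm (A.mulVec x) ≤ matrixSpectralNorm A :=
  le_csSup (snSet_bddAbove A) ⟨x, hx, rfl⟩

lemma spectralNorm_nonneg (A : Matrix (Fin D) (Fin D) ℝ) : 0 ≤ matrixSpectralNorm A :=
  le_csSup (snSet_bddAbove A) (mem_snSet_zero A)

lemma spectralNorm_le {A : Matrix (Fin D) (Fin D) ℝ} {c : ℝ}
    (h : ∀ x : Fin D → ℝ, vnorm x ≤ 1 → vnorm (A.mulVec x) ≤ c) : matrixSpectralNorm A ≤ c :=
  csSup_le ⟨0, mem_snSet_zero A⟩ (by rintro y ⟨x, hx, rfl⟩; exact h x hx)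

lemma spectralNorm_UDV_le {U V : Matrix (Fin D) (Fin D) ℝ} (hU : Uᵀ * U = 1) (hV : Vᵀ * V = 1)
    {d : Fin D → ℝ} {c : ℝ} (hc : 0 ≤ c) (hd : ∀ i, |d i| ≤ c) :
    matrixSpectralNorm (U * Matrix.diagonal d * Vᵀ) ≤ c := by
  apply spectralNorm_le
  intro x hx
  have hVV : Vᵀᵀ * Vᵀ = 1 := by
    rw [Matrix.transpose_transpose]
    exact mul_eq_one_comm.mp hV
  rw [← Matrix.mulVec_mulVec, ← Matrix.mulVec_mulVec, vnorm_mulVec_orth hU]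
  calc vnorm ((Matrix.diagonal d).mulVec (Vᵀ.mulVec x)) ≤ c * vnorm (Vᵀ.mulVec x) :=
        vnorm_diag_le hc hd _
    _ = c * vnorm x := by rw [vnorm_mulVec_orth hVV]
    _ ≤ c * 1 := mul_le_mul_of_nonneg_left hx hc
    _ = c := mul_one c

lemma matrix_rank_add_le (A B : Matrix (Fin D) (Fin D) ℝ) :
    (A + B).rank ≤ A.rank + B.rank := by
  have h : LinearMap.range (A + B).mulVecLin ≤
      LinearMap.range A.mulVecLin ⊔ LinearMap.range B.mulVecLin := by
    rintro y ⟨x, rfl⟩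
    rw [Matrix.mulVecLin_add]
    exact Submodule.add_mem_sup (LinearMap.mem_range_self _ x) (LinearMap.mem_range_self _ x)
  calc (A + B).rank ≤ Module.finrank ℝ
        ↥(LinearMap.range A.mulVecLin ⊔ LinearMap.range B.mulVecLin) :=
        Submodule.finrank_mono h
    _ ≤ A.rank + B.rank := Submodule.finrank_add_le_finrank_add_finrank _ _

lemma rank_UDV_le_card {U V : Matrix (Fin D) (Fin D) ℝ} (d : Fin D → ℝ) {r1 r2 : ℕ}
    (hd : ∀ i : Fin D, d i ≠ 0 → r1 ≤ (i : ℕ) ∧ (i : ℕ) < r2) :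
    (U * Matrix.diagonal d * Vᵀ).rank ≤ r2 - r1 := by
  classical
  have h1 : (U * Matrix.diagonal d * Vᵀ).rank ≤ (Matrix.diagonal d).rank :=
    (Matrix.rank_mul_le_left _ _).trans (Matrix.rank_mul_le_right _ _)
  rw [Matrix.rank_diagonal] at h1
  refine h1.trans ?_
  rw [Fintype.card_subtype]
  rw [← Nat.card_Ico r1 r2]
  apply Finset.card_le_card_of_injOn (fun i : Fin D => (i : ℕ))
  · intro i hi
    simp only [Finset.mem_coe, Finset.mem_filter] at hi
    have := hd i hi.2
    simp [Finset.mem_Ico, this.1, this.2]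
  · intro i _ j _ hij
    exact Fin.val_injective hij

lemma mprod_empty (W : ℕ → Matrix (Fin D) (Fin D) ℝ) {a b : ℕ} (h : b + 1 ≤ a) :
    mprod W a b = 1 := by
  unfold mprod
  rw [Nat.sub_eq_zero_of_le h]
  simp

lemma mprod_succ_right (W : ℕ → Matrix (Fin D) (Fin D) ℝ) {a b : ℕ} (h : a ≤ b + 1) :
    mprod W a (b + 1) = W (b + 1) * mprod W a b := by
  unfold mprod
  have h1 : b + 1 + 1 - a = (b + 1 - a) + 1 := by omega
  have h2 : a + 1 * (b + 1 - a) = b + 1 := by omega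
  rw [h1, List.range'_concat, h2]
  simp

lemma mprod_succ_left (W : ℕ → Matrix (Fin D) (Fin D) ℝ) {a b : ℕ} (h : a ≤ b) :
    mprod W a b = mprod W (a + 1) b * W a := by
  unfold mprod
  have h1 : b + 1 - a = (b + 1 - (a + 1)) + 1 := by omega
  rw [h1, List.range'_succ]
  simp

lemma isUnit_det_mprod (W : ℕ → Matrix (Fin D) (Fin D) ℝ) {a : ℕ} (ha : 1 ≤ a) (b : ℕ)
    (h : ∀ l ∈ Finset.Icc a b, IsUnit (W l).det) : IsUnit (mprod W a b).det := by
  induction b with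
  | zero =>
      rw [mprod_empty W (by omega)]
      simp
  | succ b ih =>
      by_cases hab : a ≤ b + 1
      · rw [mprod_succ_right W hab, Matrix.det_mul]
        refine IsUnit.mul (h _ (by simp [Finset.mem_Icc, hab])) (ih ?_)
        intro l hl
        apply h
        simp only [Finset.mem_Icc] at hl ⊢
        omega
      · rw [mprod_empty W (by omega)]
        simp

lemma sigma_le_spectralNorm {E : Matrix (Fin D) (Fin D) ℝ} (s : SVD E) (S : ℕ)
    (B : Matrix (Fin D) (Fin D) ℝ) (hB : B.rank ≤ S) : s.σ S ≤ matrixSpectralNorm (B - E) := by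
  by_cases hSD : D ≤ S
  · rw [s.tail_zero S hSD]
    exact spectralNorm_nonneg _
  push_neg at hSD
  have hVinj : Function.Injective s.V.mulVecLin := by
    intro x y hxy
    have h1 : s.Vᵀ.mulVec (s.V.mulVec x) = s.Vᵀ.mulVec (s.V.mulVec y) := by
      simpa [Matrix.mulVecLin_apply] using congrArg s.Vᵀ.mulVec hxy
    rwa [Matrix.mulVec_mulVec, Matrix.mulVec_mulVec, s.hV, Matrix.one_mulVec,
      Matrix.one_mulVec] at h1
  have hVker : LinearMap.ker s.V.mulVecLin = ⊥ := LinearMap.ker_eq_bot.mpr hVinj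
  set emb : Fin (S + 1) → Fin D := fun k => ⟨(k : ℕ), by omega⟩ with hemb
  have hembinj : Function.Injective emb := by
    intro a b hab
    apply Fin.val_injective
    simpa [hemb] using congrArg Fin.val hab
  set b : Fin (S + 1) → (Fin D → ℝ) := fun k => Pi.single (emb k) 1 with hbdef
  have hb : LinearIndependent ℝ b := by
    have h := (Pi.basisFun ℝ (Fin D)).linearIndependent.comp emb hembinj
    have : (⇑(Pi.basisFun ℝ (Fin D)) ∘ emb) = b := by
      funext k
      simp [hbdef, Pi.basisFun_apply]
    rwa [this] at h
  set bV : Fin (S + 1) → (Fin D → ℝ) := fun k => s.V.mulVec (b k) with hbVdef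
  have hbV : LinearIndependent ℝ bV := by
    have h := hb.map' s.V.mulVecLin hVker
    have : (⇑s.V.mulVecLin ∘ b) = bV := by
      funext k; simp [hbVdef, Matrix.mulVecLin_apply]
    rwa [this] at h
  set T : Submodule ℝ (Fin D → ℝ) := Submodule.span ℝ (Set.range bV) with hTdef
  have hT : Module.finrank ℝ ↥T = S + 1 := by
    rw [hTdef, finrank_span_eq_card hbV, Fintype.card_fin]
  set K : Submodule ℝ (Fin D → ℝ) := LinearMap.ker B.mulVecLin with hKdef
  have hfrD : Module.finrank ℝ (Fin D → ℝ) = D := by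
    rw [Module.finrank_pi, Fintype.card_fin]
  have hK : B.rank + Module.finrank ℝ ↥K = D := by
    have := LinearMap.finrank_range_add_finrank_ker B.mulVecLin
    rw [hfrD] at this
    exact this
  have hdim : 0 < Module.finrank ℝ ↥(T ⊓ K) := by
    have h1 := Submodule.finrank_sup_add_finrank_inf_eq T K
    have h2 : Module.finrank ℝ ↥(T ⊔ K) ≤ D := by
      have h3 : Module.finrank ℝ ↥(T ⊔ K) ≤ Module.finrank ℝ (Fin D → ℝ) :=
        Submodule.finrank_le _
      omega
    omega
  have : Nontrivial ↥(T ⊓ K) := Module.nontrivial_of_finrank_pos hdim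
  obtain ⟨⟨x, hxmem⟩, hxne⟩ := exists_ne (0 : ↥(T ⊓ K))
  have hxne' : x ≠ 0 := fun h => hxne (Subtype.ext h)
  have hxT : x ∈ T := hxmem.1
  have hxK : B.mulVec x = 0 := by
    have h5 : x ∈ LinearMap.ker B.mulVecLin := hxmem.2
    rwa [LinearMap.mem_ker, Matrix.mulVecLin_apply] at h5
  obtain ⟨c, hc⟩ := (Submodule.mem_span_range_iff_exists_fun ℝ).mp hxT
  set y : Fin D → ℝ := ∑ k, c k • b k with hydef
  have hxy : s.V.mulVec y = x := by
    rw [← hc, hydef]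
    rw [← Matrix.mulVecLin_apply, map_sum]
    apply Finset.sum_congr rfl
    intro k _
    simp [Matrix.mulVecLin_apply, Matrix.mulVec_smul, hbVdef]
  have hy0 : ∀ i : Fin D, S < (i : ℕ) → y i = 0 := by
    intro i hi
    rw [hydef]
    rw [Finset.sum_apply]
    apply Finset.sum_eq_zero
    intro k _
    have hne : emb k ≠ i := by
      intro h
      have : (k : ℕ) = (i : ℕ) := by simpa [hemb] using congrArg Fin.val h
      omega
    have hb0 : b k i = 0 := by rw [hbdef]; exact Pi.single_eq_of_ne hne.symm 1
    simp [hb0]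
  have hvy : vnorm x = vnorm y := by rw [← hxy, vnorm_mulVec_orth s.hV]
  have hVtx : s.Vᵀ.mulVec x = y := by
    rw [← hxy, Matrix.mulVec_mulVec, s.hV, Matrix.one_mulVec]
  have hEx : E.mulVec x = s.U.mulVec ((Matrix.diagonal (fun i : Fin D => s.σ i)).mulVec y) := by
    conv_rhs => rw [← hVtx]
    conv_lhs => rw [s.decomp]
    rw [Matrix.mulVec_mulVec, Matrix.mulVec_mulVec, Matrix.mul_assoc]
  have hExn : s.σ S * vnorm y ≤ vnorm (E.mulVec x) := by
    rw [hEx, vnorm_mulVec_orth s.hU]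
    unfold vnorm
    rw [← Real.sqrt_sq (s.nonneg S), ← Real.sqrt_mul (sq_nonneg _)]
    apply Real.sqrt_le_sqrt
    rw [Finset.mul_sum]
    apply Finset.sum_le_sum
    intro i _
    rw [Matrix.mulVec_diagonal, mul_pow]
    rcases le_or_gt (i : ℕ) S with hi | hi
    · have h1 : s.σ S ≤ s.σ (i : ℕ) := s.anti _ _ hi
      have h2 : 0 ≤ s.σ S := s.nonneg S
      have h3 : s.σ S ^ 2 ≤ s.σ (i : ℕ) ^ 2 := by nlinarith
      exact mul_le_mul_of_nonneg_right h3 (sq_nonneg _)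
    · rw [hy0 i hi]
      simp
  have hvxpos : 0 < vnorm x := vnorm_pos hxne'
  set u : Fin D → ℝ := (vnorm x)⁻¹ • x with hudef
  have hu : vnorm u = 1 := by
    rw [hudef, vnorm_smul, abs_of_pos (inv_pos.mpr hvxpos), inv_mul_cancel₀ hvxpos.ne']
  have h2 : (B - E).mulVec u = -((vnorm x)⁻¹ • E.mulVec x) := by
    rw [hudef, Matrix.mulVec_smul, Matrix.sub_mulVec, hxK, zero_sub, smul_neg]
  have h3 : vnorm ((B - E).mulVec u) = (vnorm x)⁻¹ * vnorm (E.mulVec x) := by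
    rw [h2, vnorm_neg, vnorm_smul, abs_of_pos (inv_pos.mpr hvxpos)]
  have final : s.σ S ≤ vnorm ((B - E).mulVec u) := by
    rw [h3]
    have h4 : s.σ S * vnorm x ≤ vnorm (E.mulVec x) := by
      rw [hvy]; exact hExn
    calc s.σ S = (vnorm x)⁻¹ * (s.σ S * vnorm x) := by
          field_simp
      _ ≤ (vnorm x)⁻¹ * vnorm (E.mulVec x) :=
          mul_le_mul_of_nonneg_left h4 (inv_nonneg.mpr hvxpos.le)
  exact final.trans (le_spectralNorm hu.le)

lemma rank_mprod_sub (W ΔW : ℕ → Matrix (Fin D) (Fin D) ℝ) (b : ℕ) :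
    (mprod (fun l => W l + ΔW l) 1 b - mprod W 1 b).rank ≤
      ∑ l ∈ Finset.Icc 1 b, (ΔW l).rank := by
  induction b with
  | zero =>
      rw [mprod_empty _ (le_refl 1), mprod_empty _ (le_refl 1)]
      simp
  | succ b ih =>
      rw [mprod_succ_right _ (by omega), mprod_succ_right (W := W) (by omega)]
      have key : (W (b + 1) + ΔW (b + 1)) * mprod (fun l => W l + ΔW l) 1 b
          - W (b + 1) * mprod W 1 b
          = (W (b + 1) + ΔW (b + 1)) * (mprod (fun l => W l + ΔW l) 1 b - mprod W 1 b)
            + ΔW (b + 1) * mprod W 1 b := by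
        noncomm_ring
      rw [key, Finset.sum_Icc_succ_top (by omega : 1 ≤ b + 1)]
      calc ((W (b + 1) + ΔW (b + 1)) * (mprod (fun l => W l + ΔW l) 1 b - mprod W 1 b)
            + ΔW (b + 1) * mprod W 1 b).rank
          ≤ ((W (b + 1) + ΔW (b + 1)) * (mprod (fun l => W l + ΔW l) 1 b - mprod W 1 b)).rank
            + (ΔW (b + 1) * mprod W 1 b).rank := matrix_rank_add_le _ _
        _ ≤ (mprod (fun l => W l + ΔW l) 1 b - mprod W 1 b).rank + (ΔW (b + 1)).rank :=
            Nat.add_le_add (Matrix.rank_mul_le_right _ _) (Matrix.rank_mul_le_left _ _)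
        _ ≤ (∑ l ∈ Finset.Icc 1 b, (ΔW l).rank) + (ΔW (b + 1)).rank :=
            Nat.add_le_add_right ih _

lemma sigma_eq_zero_of_rank_le {E : Matrix (Fin D) (Fin D) ℝ} (s : SVD E) {i : ℕ}
    (hi : E.rank ≤ i) : s.σ i = 0 := by
  obtain ⟨U, V, σ, hU, hV, hnn, hanti, htz, hdec⟩ := s
  simp only
  by_cases hD : D ≤ i
  · exact htz i hD
  push_neg at hD
  by_contra hne
  have hpos : 0 < σ i := lt_of_le_of_ne (hnn i) (Ne.symm hne)
  classical
  have hdrank : (Matrix.diagonal (fun j : Fin D => σ (j : ℕ))).rank ≤ E.rank := by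
    have h1 : Uᵀ * E * V = Matrix.diagonal (fun j : Fin D => σ (j : ℕ)) := by
      rw [hdec]
      simp only [← Matrix.mul_assoc]
      rw [hU, Matrix.one_mul, Matrix.mul_assoc, hV, Matrix.mul_one]
    rw [← h1]
    exact (Matrix.rank_mul_le_left _ _).trans (Matrix.rank_mul_le_right _ _)
  rw [Matrix.rank_diagonal] at hdrank
  have hcard : i + 1 ≤ Fintype.card {j : Fin D // σ (j : ℕ) ≠ 0} := by
    rw [Fintype.card_subtype]
    have hsub := Finset.card_le_card_of_injOn
      (f := fun k : ℕ => (⟨k % D, Nat.mod_lt k (by omega)⟩ : Fin D))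
      (s := Finset.range (i + 1))
      (t := Finset.univ.filter fun j : Fin D => σ (j : ℕ) ≠ 0) ?_ ?_
    · simpa using hsub
    · intro k hk
      rw [Finset.mem_coe, Finset.mem_range] at hk
      have hkD : k % D = k := Nat.mod_eq_of_lt (by omega)
      simp only [Finset.mem_coe, Finset.mem_filter, Finset.mem_univ, true_and]
      intro h0
      rw [hkD] at h0
      have : σ i ≤ σ k := hanti k i (by omega)
      have : 0 < σ k := lt_of_lt_of_le hpos this
      rw [h0] at this
      exact lt_irrefl 0 this
    · intro k1 hk1 k2 hk2 h12
      rw [Finset.mem_coe, Finset.mem_range] at hk1 hk2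
      have e1 : k1 % D = k1 := Nat.mod_eq_of_lt (by omega)
      have e2 : k2 % D = k2 := Nat.mod_eq_of_lt (by omega)
      have := congrArg Fin.val h12
      simpa [e1, e2] using this
  omega

lemma trunc_sub_trunc {E : Matrix (Fin D) (Fin D) ℝ} (s : SVD E) (r1 r2 : ℕ) :
    s.trunc r2 - s.trunc r1 = s.U * Matrix.diagonal
      (fun i : Fin D => (if (i : ℕ) < r2 then s.σ i else 0)
        - (if (i : ℕ) < r1 then s.σ i else 0)) * s.Vᵀ := by
  unfold SVD.trunc
  rw [← Matrix.diagonal_sub, Matrix.mul_sub, Matrix.sub_mul]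

lemma rank_trunc_le {E : Matrix (Fin D) (Fin D) ℝ} (s : SVD E) (r : ℕ) :
    (s.trunc r).rank ≤ r := by
  unfold SVD.trunc
  have h := rank_UDV_le_card (U := s.U) (V := s.V)
    (fun i : Fin D => if (i : ℕ) < r then s.σ i else 0) (r1 := 0) (r2 := r)
    (fun i hi => by
      refine ⟨Nat.zero_le _, ?_⟩
      by_contra hcon
      exact hi (if_neg (by omega)))
  simpa using h

lemma trunc_min_eq {E : Matrix (Fin D) (Fin D) ℝ} (s : SVD E) (S e' : ℕ)
    (he : e' = E.rank) : s.trunc (min S e') = s.trunc S := by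
  have hfun : (fun i : Fin D => if (i : ℕ) < min S e' then s.σ i else 0)
      = (fun i : Fin D => if (i : ℕ) < S then s.σ i else 0) := by
    funext i
    by_cases h1 : (i : ℕ) < min S e'
    · rw [if_pos h1, if_pos (by omega)]
    · by_cases h2 : (i : ℕ) < S
      · rw [if_neg h1, if_pos h2]
        have hei : E.rank ≤ (i : ℕ) := by omega
        exact (sigma_eq_zero_of_rank_le s hei).symm
      · rw [if_neg h1, if_neg h2]
  unfold SVD.trunc
  rw [hfun]

lemma trunc_eq_self {E : Matrix (Fin D) (Fin D) ℝ} (s : SVD E) {r : ℕ}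
    (hr : E.rank ≤ r) : s.trunc r = E := by
  have hfun : (fun i : Fin D => if (i : ℕ) < r then s.σ i else 0)
      = (fun i : Fin D => s.σ i) := by
    funext i
    by_cases h : (i : ℕ) < r
    · rw [if_pos h]
    · rw [if_neg h]
      exact (sigma_eq_zero_of_rank_le s (by omega)).symm
  conv_rhs => rw [s.decomp]
  unfold SVD.trunc
  rw [hfun]

lemma trunc_sub_self {E : Matrix (Fin D) (Fin D) ℝ} (s : SVD E) (r : ℕ) :
    s.trunc r - E = s.U * Matrix.diagonal
      (fun i : Fin D => (if (i : ℕ) < r then s.σ i else 0) - s.σ i) * s.Vᵀ := by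
  obtain ⟨U, V, σ, hU, hV, hnn, hanti, htz, hdec⟩ := s
  simp only [SVD.trunc]
  rw [hdec, ← Matrix.diagonal_sub, Matrix.mul_sub, Matrix.sub_mul]

end LoraAux

/-- **Optimal LoRA approximation for linear models with per-layer ranks
(Lemma 3).**  The minimum of `‖∏_{l=1}^{L}(W_l + ΔW_l) − W̄‖₂` over adapters
with `rank(ΔW_l) ≤ R_l` equals `σ_{(Σ_l R_l)+1}(E)`, it is attained by adapters
with `∏_{l=1}^{L}(W_l + ΔW_l) = ∏_{l=1}^{L} W_l + α_{min(Σ_l R_l, e)}(E)`, and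
if `Σ_l R_l ≥ e` these adapters give `∏_{l=1}^{L}(W_l + ΔW_l) = W̄`. -/
theorem lora_linear_min_spectral_error_general_ranks (D L : ℕ)
    (hD : 1 ≤ D) (hL : 1 ≤ L)
    (Wbar : Matrix (Fin D) (Fin D) ℝ) (W : ℕ → Matrix (Fin D) (Fin D) ℝ)
    (E : Matrix (Fin D) (Fin D) ℝ) (hE : E = Wbar - mprod W 1 L)
    (e : ℕ) (he : e = E.rank)
    (R : ℕ → ℕ)
    (sE : SVD E)
    (hWns : ∀ l ∈ Finset.Icc 1 L, (W l).det ≠ 0)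
    (hns : ∀ r ≤ ∑ l ∈ Finset.Icc 1 (L - 1), R l,
      (mprod W 1 L + sE.trunc r).det ≠ 0) :
    IsLeast
      {c : ℝ | ∃ ΔW : ℕ → Matrix (Fin D) (Fin D) ℝ,
        (∀ l ∈ Finset.Icc 1 L, (ΔW l).rank ≤ R l) ∧
        c = matrixSpectralNorm (mprod (fun l => W l + ΔW l) 1 L - Wbar)}
      (sE.σ (∑ l ∈ Finset.Icc 1 L, R l)) ∧
    ∃ ΔW : ℕ → Matrix (Fin D) (Fin D) ℝ,
      (∀ l ∈ Finset.Icc 1 L, (ΔW l).rank ≤ R l) ∧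
      mprod (fun l => W l + ΔW l) 1 L =
        mprod W 1 L + sE.trunc (min (∑ l ∈ Finset.Icc 1 L, R l) e) ∧
      (e ≤ ∑ l ∈ Finset.Icc 1 L, R l →
        mprod (fun l => W l + ΔW l) 1 L = Wbar) := by
  classical
  open LoraAux in
  set S : ℕ := ∑ l ∈ Finset.Icc 1 L, R l with hS
  set Sf : ℕ → ℕ := fun l => ∑ k ∈ Finset.Icc 1 l, R k with hSf
  have hSf0 : Sf 0 = 0 := by simp [hSf]
  have hSfL : Sf L = S := rfl
  have hSfmono : ∀ a b : ℕ, a ≤ b → Sf a ≤ Sf b := by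
    intro a b hab
    exact Finset.sum_le_sum_of_subset (Finset.Icc_subset_Icc_right hab)
  have hWu : ∀ l ∈ Finset.Icc 1 L, IsUnit (W l).det := fun l hl =>
    isUnit_iff_ne_zero.mpr (hWns l hl)
  have hmp : ∀ a : ℕ, 1 ≤ a → IsUnit (mprod W a L).det := by
    intro a ha
    apply LoraAux.isUnit_det_mprod W ha L
    intro l hl
    apply hWu
    rw [Finset.mem_Icc] at hl ⊢
    omega
  set M : ℕ → Matrix (Fin D) (Fin D) ℝ :=
    fun l => (mprod W (l + 1) L)⁻¹ * (mprod W 1 L + sE.trunc (Sf l)) with hM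
  have hMunit : ∀ l : ℕ, l ≤ L - 1 → IsUnit (M l).det := by
    intro l hl
    have h1 : IsUnit (mprod W (l + 1) L).det := hmp (l + 1) (by omega)
    have h2 : (mprod W 1 L + sE.trunc (Sf l)).det ≠ 0 := by
      apply hns
      exact hSfmono l (L - 1) hl
    rw [hM]
    simp only
    rw [Matrix.det_mul]
    refine IsUnit.mul ?_ (isUnit_iff_ne_zero.mpr h2)
    exact IsUnit.of_mul_eq_one _ (by
      rw [← Matrix.det_mul, Matrix.nonsing_inv_mul _ h1, Matrix.det_one])
  have htrunc0 : sE.trunc 0 = 0 := by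
    unfold SVD.trunc
    have : (fun i : Fin D => if (i : ℕ) < 0 then sE.σ i else 0) = fun _ : Fin D => (0 : ℝ) := by
      funext i; rw [if_neg (by omega)]
    rw [this, Matrix.diagonal_zero, Matrix.mul_zero, Matrix.zero_mul]
  have hM0 : M 0 = 1 := by
    rw [hM]
    simp only
    rw [hSf0, htrunc0, add_zero]
    exact Matrix.nonsing_inv_mul _ (hmp 1 le_rfl)
  set ΔW : ℕ → Matrix (Fin D) (Fin D) ℝ :=
    fun l => (M l - W l * M (l - 1)) * (M (l - 1))⁻¹ with hΔW
  have hstep : ∀ l : ℕ, 1 ≤ l → l ≤ L → (W l + ΔW l) * M (l - 1) = M l := by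
    intro l h1 h2
    have hu : IsUnit (M (l - 1)).det := hMunit (l - 1) (by omega)
    rw [hΔW]
    simp only
    rw [add_mul, Matrix.mul_assoc, Matrix.nonsing_inv_mul _ hu, Matrix.mul_one]
    abel
  have hprod : ∀ l : ℕ, l ≤ L → mprod (fun k => W k + ΔW k) 1 l = M l := by
    intro l
    induction l with
    | zero => intro _; rw [LoraAux.mprod_empty _ (by omega), hM0]
    | succ n ih =>
        intro h
        rw [LoraAux.mprod_succ_right _ (by omega), ih (by omega)]
        have := hstep (n + 1) (by omega) h
        simpa using this
  have hML : M L = mprod W 1 L + sE.trunc S := by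
    rw [hM]
    simp only
    rw [LoraAux.mprod_empty W (le_refl (L + 1)), inv_one, Matrix.one_mul, hSfL]
  have hrank : ∀ l ∈ Finset.Icc 1 L, (ΔW l).rank ≤ R l := by
    intro l hl
    rw [Finset.mem_Icc] at hl
    obtain ⟨h1, h2⟩ := hl
    have hWl : IsUnit (W l).det := hWu l (by rw [Finset.mem_Icc]; omega)
    have hl1 : l - 1 + 1 = l := by omega
    have hsplit : mprod W l L = mprod W (l + 1) L * W l := LoraAux.mprod_succ_left W h2
    have hWM : W l * M (l - 1) =
        (mprod W (l + 1) L)⁻¹ * (mprod W 1 L + sE.trunc (Sf (l - 1))) := by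
      rw [hM]
      simp only
      rw [hl1, hsplit, Matrix.mul_inv_rev, ← Matrix.mul_assoc, ← Matrix.mul_assoc,
        Matrix.mul_nonsing_inv _ hWl, Matrix.one_mul]
    have hdiff : M l - W l * M (l - 1) =
        (mprod W (l + 1) L)⁻¹ * (sE.trunc (Sf l) - sE.trunc (Sf (l - 1))) := by
      rw [hWM, hM]
      simp only
      rw [← Matrix.mul_sub]
      congr 1
      abel
    have hSfstep : Sf l = Sf (l - 1) + R l := by
      have := Finset.sum_Icc_succ_top (a := 1) (b := l - 1) (f := R) (by omega)
      rw [hl1] at this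
      exact this
    have htr : (sE.trunc (Sf l) - sE.trunc (Sf (l - 1))).rank ≤ R l := by
      rw [LoraAux.trunc_sub_trunc sE (Sf (l - 1)) (Sf l)]
      have h5 := LoraAux.rank_UDV_le_card (U := sE.U) (V := sE.V)
        (fun i : Fin D => (if (i : ℕ) < Sf l then sE.σ i else 0)
          - (if (i : ℕ) < Sf (l - 1) then sE.σ i else 0))
        (r1 := Sf (l - 1)) (r2 := Sf l) ?_
      · refine h5.trans ?_
        omega
      · intro i hi
        have hi' : (if (i : ℕ) < Sf l then sE.σ i else 0)
            - (if (i : ℕ) < Sf (l - 1) then sE.σ i else 0) ≠ 0 := hi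
        have hmono : Sf (l - 1) ≤ Sf l := hSfmono _ _ (by omega)
        by_cases ha : (i : ℕ) < Sf (l - 1)
        · exfalso
          apply hi'
          rw [if_pos (by omega), if_pos ha, sub_self]
        · by_cases hb : (i : ℕ) < Sf l
          · exact ⟨by omega, hb⟩
          · exfalso
            apply hi'
            rw [if_neg hb, if_neg ha, sub_self]
    calc (ΔW l).rank ≤ (M l - W l * M (l - 1)).rank := by
          rw [hΔW]; exact Matrix.rank_mul_le_left _ _
      _ = ((mprod W (l + 1) L)⁻¹ * (sE.trunc (Sf l) - sE.trunc (Sf (l - 1)))).rank := by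
          rw [hdiff]
      _ ≤ (sE.trunc (Sf l) - sE.trunc (Sf (l - 1))).rank := Matrix.rank_mul_le_right _ _
      _ ≤ R l := htr
  have hPL : mprod (fun k => W k + ΔW k) 1 L = mprod W 1 L + sE.trunc S := by
    rw [hprod L le_rfl, hML]
  -- lower bound
  have hlower : ∀ c ∈ {c : ℝ | ∃ ΔW' : ℕ → Matrix (Fin D) (Fin D) ℝ,
      (∀ l ∈ Finset.Icc 1 L, (ΔW' l).rank ≤ R l) ∧
      c = matrixSpectralNorm (mprod (fun l => W l + ΔW' l) 1 L - Wbar)}, sE.σ S ≤ c := by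
    rintro c ⟨ΔW', hΔr, rfl⟩
    have hr : (mprod (fun k => W k + ΔW' k) 1 L - mprod W 1 L).rank ≤ S := by
      refine (LoraAux.rank_mprod_sub W ΔW' L).trans ?_
      exact Finset.sum_le_sum hΔr
    have heq : mprod (fun k => W k + ΔW' k) 1 L - Wbar
        = (mprod (fun k => W k + ΔW' k) 1 L - mprod W 1 L) - E := by
      rw [hE]; abel
    rw [heq]
    exact LoraAux.sigma_le_spectralNorm sE S _ hr
  -- value of constructed adapters
  have hval : matrixSpectralNorm (mprod (fun k => W k + ΔW k) 1 L - Wbar) = sE.σ S := by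
    have heq2' : ∀ T : Matrix (Fin D) (Fin D) ℝ, mprod W 1 L + T - Wbar = T - E := by
      intro T; rw [hE]; abel
    have heq2 : mprod (fun k => W k + ΔW k) 1 L - Wbar = sE.trunc S - E := by
      rw [hPL]; exact heq2' _
    rw [heq2]
    apply le_antisymm
    · -- upper bound
      rw [LoraAux.trunc_sub_self sE S]
      apply LoraAux.spectralNorm_UDV_le sE.hU sE.hV (sE.nonneg S)
      intro i
      by_cases h1 : (i : ℕ) < S
      · rw [if_pos h1, sub_self, abs_zero]
        exact sE.nonneg S
      · rw [if_neg h1, zero_sub, abs_neg, abs_of_nonneg (sE.nonneg _)]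
        exact sE.anti S (i : ℕ) (by omega)
    · -- lower bound
      exact LoraAux.sigma_le_spectralNorm sE S (sE.trunc S) (LoraAux.rank_trunc_le sE S)
  refine ⟨⟨⟨ΔW, hrank, hval.symm⟩, hlower⟩, ΔW, hrank, ?_, ?_⟩
  · rw [hPL, LoraAux.trunc_min_eq sE S e he]
  · intro hle
    have h9 : sE.trunc S = E := LoraAux.trunc_eq_self sE (by omega)
    rw [hPL, h9, hE]
    abel

end
end

section
/- Let f̄ = FNN_{L̄,D}(·; (W̄_i)_{i=1}^{L̄}, (b̄_i)_{i=1}^{L̄}) be a target network and (W_l)_{l=1}^{L} frozen weights with L ≥ L̄, and fix a LoRA-rank R ∈ {1, …, D} for which Assumption 1 holds. If R ≥ ⌈ max_{i∈{1,…,L̄}} rank(W̄_i − ∏_{l∈P^u_i} W_l) / M ⌉, then there exist matrices ΔW_1, …, ΔW_L ∈ ℝ^{D×D}, each of rank at most R, and bias vectors b̂_1, …, b̂_L ∈ ℝ^D, such that the adapted model f := FNN_{L,D}(·; (W_l + ΔW_l)_{l=1}^{L}, (b̂_l)_{l=1}^{L}) satisfies f(x) = f̄(x) for every x in the bounded input region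 X. -/
/-!
Each block of `m ≥ M` frozen layers of the uniform partition has to reproduce one target
layer `x ↦ ReLU (W̄ x + b̄)`. Let `P` be the product of the block's frozen weights and
`E = W̄ - P`, and walk from `P` to `W̄` along `G_k = P + α_{r_k}(E)` with
`r_k = min (k R) (R (M - 1))` for `k < m` and `G_m = W̄`. Consecutive `G_k` differ by a
matrix of rank `≤ R` (the last step because `rank E ≤ R M`), and the `G_k` with `k < m` are
invertible by Assumption 1. Adapted weights whose partial products are
`Ŵ_k ⋯ Ŵ_1 = (W_m ⋯ W_{k+1})⁻¹ G_k` then have product `W̄` and differ from `W_k` by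
`(W_m ⋯ W_{k+1})⁻¹ (G_k - G_{k-1}) (Ŵ_{k-1} ⋯ Ŵ_1)⁻¹`, of rank `≤ R`.
Inside a block the activations range over a bounded set, so large constant biases keep every
pre-activation but the block's last one nonnegative: those ReLUs act as the identity and the
block computes `ReLU (W̄ x + b̄)`.
-/

open Matrix Finset

noncomputable section

/-- Entrywise ReLU on vectors. -/
def reluVec {D : ℕ} (x : Fin D → ℝ) : Fin D → ℝ := fun i => max (x i) 0

/-- `fnn W b L x` is the output of the `L`-layer width-`D` ReLU fully connected
network with weight matrices `W` and biases `b` (layers indexed `1, …, L`):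
`z_0 = x`, `z_l = ReLU (W_l z_{l-1} + b_l)`. -/
def fnn {D : ℕ} (W : ℕ → Matrix (Fin D) (Fin D) ℝ) (b : ℕ → Fin D → ℝ) :
    ℕ → (Fin D → ℝ) → Fin D → ℝ
  | 0, x => x
  | l + 1, x => reluVec ((W (l + 1)).mulVec (fnn W b l x) + b (l + 1))

/-- `∏_{l ∈ P^u_i} W_l` : product of the frozen weights over the `i`-th block
of the uniform partition of `{1, …, L}` into `L̄` blocks (`M := ⌊L/L̄⌋`;
block `i < L̄` is `{(i−1)M+1, …, iM}` and block `L̄` is `{(L̄−1)M+1, …, L}`),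
with larger indices on the left. -/
def puProd {D : ℕ} (W : ℕ → Matrix (Fin D) (Fin D) ℝ) (L Lbar i : ℕ) :
    Matrix (Fin D) (Fin D) ℝ :=
  mprod W ((i - 1) * (L / Lbar) + 1) (if i = Lbar then L else i * (L / Lbar))

section Network

variable {D : ℕ}

lemma continuous_reluVec : Continuous (reluVec : (Fin D → ℝ) → Fin D → ℝ) :=
  continuous_pi fun j => (continuous_apply j).max continuous_const

lemma continuous_fnn (W : ℕ → Matrix (Fin D) (Fin D) ℝ) (b : ℕ → Fin D → ℝ) (n : ℕ) :
    Continuous (fnn W b n) := by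
  induction n with
  | zero => exact continuous_id
  | succ n ih =>
    exact continuous_reluVec.comp ((continuous_const.matrix_mulVec ih).add continuous_const)

lemma Bornology.IsBounded.image_of_continuous {E F : Type*} [PseudoMetricSpace E] [ProperSpace E]
    [PseudoMetricSpace F] {s : Set E} (hs : Bornology.IsBounded s) {f : E → F}
    (hf : Continuous f) : Bornology.IsBounded (f '' s) :=
  (hs.isCompact_closure.image hf).isBounded.subset (Set.image_mono subset_closure)

lemma exists_reluVec_add_eq_of_isBounded {Z : Set (Fin D → ℝ)} (hZ : Bornology.IsBounded Z) :
    ∃ d : Fin D → ℝ, ∀ z ∈ Z, reluVec (z + d) = z + d := by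
  obtain ⟨C, hC⟩ := isBounded_iff_forall_norm_le.1 hZ
  refine ⟨fun _ => C, fun z hz => funext fun j => max_eq_left ?_⟩
  have hzj : ‖z j‖ ≤ C := (norm_le_pi_norm z j).trans (hC z hz)
  rw [Real.norm_eq_abs] at hzj
  simp only [Pi.add_apply]
  linarith [neg_abs_le (z j)]

lemma fnn_congr {W W' : ℕ → Matrix (Fin D) (Fin D) ℝ} {b b' : ℕ → Fin D → ℝ} {n : ℕ}
    (hW : ∀ k ≤ n, W k = W' k) (hb : ∀ k ≤ n, b k = b' k) (x : Fin D → ℝ) :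
    fnn W b n x = fnn W' b' n x := by
  induction n with
  | zero => rfl
  | succ n ih =>
    simp only [fnn, hW (n + 1) le_rfl, hb (n + 1) le_rfl,
      ih (fun k hk => hW k (by omega)) (fun k hk => hb k (by omega))]

lemma fnn_update_bias_succ (W : ℕ → Matrix (Fin D) (Fin D) ℝ) (b : ℕ → Fin D → ℝ) (n : ℕ)
    (v x : Fin D → ℝ) :
    fnn W (Function.update b (n + 1) v) (n + 1) x = reluVec (W (n + 1) *ᵥ fnn W b n x + v) := by
  rw [fnn, Function.update_self,
    fnn_congr (fun _ _ => rfl) (fun k hk => Function.update_of_ne (by omega) _ _)]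

lemma fnn_piecewise (W W' : ℕ → Matrix (Fin D) (Fin D) ℝ) (b b' : ℕ → Fin D → ℝ) (a n : ℕ)
    (x : Fin D → ℝ) :
    fnn (fun l => if l ≤ a then W l else W' l) (fun l => if l ≤ a then b l else b' l) (a + n) x
      = fnn (fun k => W' (a + k)) (fun k => b' (a + k)) n (fnn W b a x) := by
  induction n with
  | zero => exact fnn_congr (fun k hk => if_pos hk) (fun k hk => if_pos hk) x
  | succ n ih =>
    have h : ¬ a + (n + 1) ≤ a := by omega
    rw [← add_assoc, fnn, fnn, ih, add_assoc, if_neg h, if_neg h]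

end Network

section mprod

variable {D : ℕ} (W : ℕ → Matrix (Fin D) (Fin D) ℝ)

lemma mprod_of_lt {a b : ℕ} (h : b < a) : mprod W a b = 1 := by
  simp [mprod, show b + 1 - a = 0 by omega]

lemma mprod_succ_s10 {a b : ℕ} (h : a ≤ b + 1) : mprod W a (b + 1) = W (b + 1) * mprod W a b := by
  rw [mprod, mprod, show b + 1 + 1 - a = b + 1 - a + 1 by omega, List.range'_concat,
    List.map_append, List.reverse_append, List.prod_append]
  simp [show a + (b + 1 - a) = b + 1 by omega]

lemma mprod_eq_mprod_mul {a b : ℕ} (h : a ≤ b) : mprod W a b = mprod W (a + 1) b * W a := by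
  rw [mprod, mprod, show b + 1 - a = b + 1 - (a + 1) + 1 by omega, List.range'_succ,
    List.map_cons, List.reverse_cons, List.prod_append, List.prod_singleton]

lemma mprod_shift (a i j : ℕ) : mprod (fun k => W (a + k)) i j = mprod W (a + i) (a + j) := by
  rw [mprod, mprod, show a + j + 1 - (a + i) = j + 1 - i by omega, ← List.map_add_range',
    List.map_map]
  rfl

lemma isUnit_det_mprod {a b : ℕ} (h : ∀ l ∈ Icc a b, IsUnit (W l).det) :
    IsUnit (mprod W a b).det := by
  rw [mprod, ← Matrix.coe_detMonoidHom, map_list_prod]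
  refine List.prod_isUnit fun u hu => ?_
  simp only [List.map_reverse, List.mem_reverse, List.map_map, List.mem_map,
    List.mem_range'_1] at hu
  obtain ⟨l, hl, rfl⟩ := hu
  exact h l (mem_Icc.2 ⟨hl.1, by omega⟩)

end mprod

section Emulation

variable {D : ℕ}

lemma exists_bias_fnn_eq_affine (A : ℕ → Matrix (Fin D) (Fin D) ℝ) {Y : Set (Fin D → ℝ)}
    (hY : Bornology.IsBounded Y) :
    ∀ n, ∃ (b : ℕ → Fin D → ℝ) (c : Fin D → ℝ), ∀ y ∈ Y, fnn A b n y = mprod A 1 n *ᵥ y + c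
  | 0 => ⟨0, 0, fun y _ => by simp [fnn, mprod]⟩
  | n + 1 => by
    obtain ⟨b, c, hbc⟩ := exists_bias_fnn_eq_affine A hY n
    obtain ⟨d, hd⟩ := exists_reluVec_add_eq_of_isBounded
      (hY.image_of_continuous (continuous_const.matrix_mulVec continuous_id :
        Continuous (mprod A 1 (n + 1) *ᵥ ·)))
    refine ⟨Function.update b (n + 1) (d - A (n + 1) *ᵥ c), d, fun y hy => ?_⟩
    rw [fnn_update_bias_succ, hbc y hy, ← hd _ (Set.mem_image_of_mem _ hy),
      mprod_succ_s10 A (by omega), ← mulVec_mulVec, mulVec_add]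
    congr 1
    abel

theorem exists_bias_fnn_eq_reluVec_mprod (A : ℕ → Matrix (Fin D) (Fin D) ℝ) {m : ℕ} (hm : 1 ≤ m)
    {Y : Set (Fin D → ℝ)} (hY : Bornology.IsBounded Y) (β : Fin D → ℝ) :
    ∃ b : ℕ → Fin D → ℝ, ∀ y ∈ Y, fnn A b m y = reluVec (mprod A 1 m *ᵥ y + β) := by
  obtain ⟨n, rfl⟩ : ∃ n, m = n + 1 := ⟨m - 1, by omega⟩
  obtain ⟨b, c, hbc⟩ := exists_bias_fnn_eq_affine A hY n
  refine ⟨Function.update b (n + 1) (β - A (n + 1) *ᵥ c), fun y hy => ?_⟩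
  rw [fnn_update_bias_succ, hbc y hy, mprod_succ_s10 A (by omega), ← mulVec_mulVec, mulVec_add]
  congr 1
  abel

theorem exists_fnn_eq_of_blockwise (Wbar : ℕ → Matrix (Fin D) (Fin D) ℝ) (bbar : ℕ → Fin D → ℝ)
    (p : ℕ → Matrix (Fin D) (Fin D) ℝ → Prop) (e : ℕ → ℕ) (n : ℕ) (he0 : e 0 = 0)
    (he : ∀ i < n, e i < e (i + 1))
    (hblock : ∀ i < n, ∃ A : ℕ → Matrix (Fin D) (Fin D) ℝ,
      mprod A (e i + 1) (e (i + 1)) = Wbar (i + 1) ∧ ∀ l ∈ Icc (e i + 1) (e (i + 1)), p l (A l))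
    {X : Set (Fin D → ℝ)} (hX : Bornology.IsBounded X) :
    ∃ (A : ℕ → Matrix (Fin D) (Fin D) ℝ) (b : ℕ → Fin D → ℝ),
      (∀ l ∈ Icc 1 (e n), p l (A l)) ∧ ∀ x ∈ X, fnn A b (e n) x = fnn Wbar bbar n x := by
  induction n with
  | zero => exact ⟨0, 0, by simp [he0], fun x _ => by simp [he0, fnn]⟩
  | succ n ih =>
    obtain ⟨A, b, hA, hAb⟩ := ih (fun i hi => he i (by omega)) (fun i hi => hblock i (by omega))
    obtain ⟨A', hA'prod, hA'⟩ := hblock n (by omega)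
    obtain ⟨m, hm⟩ : ∃ m, e (n + 1) = e n + m :=
      ⟨_, (Nat.add_sub_cancel' (he n (by omega)).le).symm⟩
    obtain ⟨b', hb'⟩ := exists_bias_fnn_eq_reluVec_mprod (fun k => A' (e n + k))
      (m := m) (by have := he n (by omega); omega)
      (hX.image_of_continuous (continuous_fnn Wbar bbar n)) (bbar (n + 1))
    refine ⟨fun l => if l ≤ e n then A l else A' l,
      fun l => if l ≤ e n then b l else b' (l - e n), fun l hl => ?_, fun x hx => ?_⟩
    · rw [mem_Icc] at hl
      dsimp only
      split_ifs with h
      · exact hA l (mem_Icc.2 ⟨hl.1, h⟩)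
      · exact hA' l (mem_Icc.2 ⟨by omega, hl.2⟩)
    · rw [hm, fnn_piecewise]
      simp only [Nat.add_sub_cancel_left]
      rw [hAb x hx, hb' _ (Set.mem_image_of_mem _ hx), mprod_shift, ← hm, hA'prod]
      rfl

end Emulation

namespace SVD

variable {D : ℕ} {E : Matrix (Fin D) (Fin D) ℝ} (s : SVD E)

lemma trunc_zero : s.trunc 0 = 0 := by
  simp [trunc]

lemma rank_eq_card_ne_zero : E.rank = Fintype.card {i : Fin D // s.σ i ≠ 0} := by
  conv_lhs => rw [s.decomp]
  rw [rank_mul_eq_left_of_isUnit_det _ _ (isUnit_det_of_right_inverse s.hV),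
    rank_mul_eq_right_of_isUnit_det _ _ (isUnit_det_of_left_inverse s.hU), rank_diagonal]

lemma σ_eq_zero_of_rank_le {i : ℕ} (h : E.rank ≤ i) : s.σ i = 0 := by
  by_contra hne
  have hiD : i < D := by_contra fun hD => hne (s.tail_zero i (not_lt.1 hD))
  -- the singular values are antitone, so `σ 0, …, σ i` are all nonzero
  have hsub : Iic (⟨i, hiD⟩ : Fin D) ⊆ univ.filter fun j : Fin D => s.σ j ≠ 0 := fun j hj =>
    mem_filter.2 ⟨mem_univ _, fun h0 => hne (le_antisymm
      (h0 ▸ s.anti _ _ (mem_Iic.1 hj : j ≤ ⟨i, hiD⟩)) (s.nonneg i))⟩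
  have hcard := card_le_card hsub
  rw [Fin.card_Iic, Fin.val_mk, ← Fintype.card_subtype, ← s.rank_eq_card_ne_zero] at hcard
  omega

lemma trunc_of_rank_le {r : ℕ} (h : E.rank ≤ r) : s.trunc r = E := by
  have hσ : (fun i : Fin D => if (i : ℕ) < r then s.σ i else 0) = fun i : Fin D => s.σ i :=
    funext fun i => by
      split_ifs with hir
      · rfl
      · exact (s.σ_eq_zero_of_rank_le (h.trans (not_lt.1 hir))).symm
  rw [trunc, hσ, ← s.decomp]

lemma rank_trunc_sub_trunc_le {r₁ r₂ : ℕ} (h : r₁ ≤ r₂) :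
    (s.trunc r₂ - s.trunc r₁).rank ≤ r₂ - r₁ := by
  classical
  set d : Fin D → ℝ := fun i => if r₁ ≤ (i : ℕ) ∧ (i : ℕ) < r₂ then s.σ i else 0
  have hsub : s.trunc r₂ - s.trunc r₁ = s.U * diagonal d * s.Vᵀ := by
    rw [trunc, trunc, ← sub_mul, ← mul_sub, diagonal_sub]
    congr 3
    ext i
    simp only [d]
    split_ifs <;> first | (exfalso; omega) | ring
  calc (s.trunc r₂ - s.trunc r₁).rank ≤ (diagonal d).rank := by
        rw [hsub]; exact (rank_mul_le_left _ _).trans (rank_mul_le_right _ _)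
    _ = #(univ.filter fun i : Fin D => d i ≠ 0) := by rw [rank_diagonal, Fintype.card_subtype]
    _ ≤ #(Ico r₁ r₂) := card_le_card_of_injOn (fun i : Fin D => (i : ℕ))
        (fun i hi => by
          simp only [coe_filter, Set.mem_ofPred_eq, mem_univ, true_and, d] at hi
          simp only [coe_Ico, Set.mem_Ico]
          by_contra hi'
          exact hi (if_neg hi'))
        (fun i _ j _ hij => Fin.ext hij)
    _ = r₂ - r₁ := Nat.card_Ico r₁ r₂

lemma rank_sub_trunc_le (r : ℕ) : (E - s.trunc r).rank ≤ E.rank - r := by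
  rcases le_total r E.rank with h | h
  · have hE : E - s.trunc r = s.trunc E.rank - s.trunc r := by rw [s.trunc_of_rank_le le_rfl]
    exact hE ▸ s.rank_trunc_sub_trunc_le h
  · simp [s.trunc_of_rank_le h]

end SVD

section Factorization

variable {D : ℕ}

theorem exists_mprod_eq_of_path (W G : ℕ → Matrix (Fin D) (Fin D) ℝ) (m : ℕ)
    (hW : ∀ k ∈ Icc 1 m, (W k).det ≠ 0) (hG0 : G 0 = mprod W 1 m)
    (hG : ∀ k < m, (G k).det ≠ 0) :
    ∃ A : ℕ → Matrix (Fin D) (Fin D) ℝ, mprod A 1 m = G m ∧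
      ∀ k ∈ Icc 1 m, (A k - W k).rank ≤ (G k - G (k - 1)).rank := by
  have hWu : ∀ k ∈ Icc 1 m, IsUnit (W k).det := fun k hk => (hW k hk).isUnit
  -- `S k` is the partial product `A k * ⋯ * A 1` of the adapted weights
  set S : ℕ → Matrix (Fin D) (Fin D) ℝ := fun k => (mprod W (k + 1) m)⁻¹ * G k
  have hS : ∀ k, S k = (mprod W (k + 1) m)⁻¹ * G k := fun _ => rfl
  have hS0 : S 0 = 1 := by
    rw [hS, hG0]
    exact nonsing_inv_mul _ (isUnit_det_mprod W hWu)
  have hSu : ∀ k < m, IsUnit (S k).det := fun k hk => by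
    rw [det_mul]
    refine (isUnit_nonsing_inv_det _ (isUnit_det_mprod W fun l hl => hWu l ?_)).mul (hG k hk).isUnit
    simp only [mem_Icc] at hl ⊢
    omega
  refine ⟨fun k => S k * (S (k - 1))⁻¹, ?_, fun k hk => ?_⟩
  · have hprod : ∀ k ≤ m, mprod (fun k => S k * (S (k - 1))⁻¹) 1 k = S k := by
      intro k
      induction k with
      | zero => exact fun _ => (mprod_of_lt _ one_pos).trans hS0.symm
      | succ k ih =>
        intro hk
        rw [mprod_succ_s10 _ (by omega), ih (by omega), Nat.add_sub_cancel, mul_assoc,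
          nonsing_inv_mul _ (hSu k (by omega)), mul_one]
    rw [hprod m le_rfl, hS, mprod_of_lt _ (Nat.lt_succ_self m), inv_one, one_mul]
  · obtain ⟨hk1, hkm⟩ := mem_Icc.1 hk
    have hWS : W k * S (k - 1) = (mprod W (k + 1) m)⁻¹ * G (k - 1) := by
      rw [hS, Nat.sub_add_cancel hk1, mprod_eq_mprod_mul W hkm, Matrix.mul_inv_rev, ← mul_assoc,
        ← mul_assoc, mul_nonsing_inv _ (hWu k hk), one_mul]
    have hdiff : (S k * (S (k - 1))⁻¹ - W k) * S (k - 1) =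
        (mprod W (k + 1) m)⁻¹ * (G k - G (k - 1)) := by
      rw [sub_mul, mul_assoc, nonsing_inv_mul _ (hSu _ (by omega)), mul_one, hWS, mul_sub]
    rw [← rank_mul_eq_left_of_isUnit_det _ _ (hSu (k - 1) (by omega)), hdiff]
    exact rank_mul_le_right _ _

theorem exists_lowRank_adapters (W : ℕ → Matrix (Fin D) (Fin D) ℝ)
    {T P : Matrix (Fin D) (Fin D) ℝ} (s : SVD (T - P)) {a b R c : ℕ} (hab : a < b)
    (hP : mprod W (a + 1) b = P) (hW : ∀ l ∈ Icc (a + 1) b, (W l).det ≠ 0)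
    (hc : c ≤ R * (b - a - 1)) (hrank : (T - P).rank ≤ c + R)
    (hns : ∀ r ≤ c, (P + s.trunc r).det ≠ 0) :
    ∃ A : ℕ → Matrix (Fin D) (Fin D) ℝ,
      mprod A (a + 1) b = T ∧ ∀ l ∈ Icc (a + 1) b, (A l - W l).rank ≤ R := by
  obtain ⟨m, rfl⟩ : ∃ m, b = a + m := ⟨b - a, by omega⟩
  rw [Nat.add_sub_cancel_left] at hc
  -- the truncation rank `min (k * R) c` grows by at most `R` per layer and reaches `c`
  -- one layer before the last, which then adds the remaining rank `≤ R`
  set G : ℕ → Matrix (Fin D) (Fin D) ℝ :=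
    fun k => if k < m then P + s.trunc (min (k * R) c) else T with hG
  have hGstep : ∀ k ∈ Icc 1 m, (G k - G (k - 1)).rank ≤ R := by
    intro k hk
    obtain ⟨hk1, hkm⟩ := mem_Icc.1 hk
    have hkR : (k - 1) * R + R = k * R := by
      rw [← Nat.succ_mul, Nat.succ_eq_add_one, Nat.sub_add_cancel hk1]
    rw [hG]
    dsimp only
    rw [if_pos (by omega : k - 1 < m)]
    split_ifs with hk
    · rw [add_sub_add_left_eq_sub]
      refine (s.rank_trunc_sub_trunc_le ?_).trans ?_ <;> omega
    · rw [sub_add_eq_sub_sub, show min ((k - 1) * R) c = c by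
        rw [show k = m by omega, mul_comm]; omega]
      refine (s.rank_sub_trunc_le c).trans ?_
      omega
  obtain ⟨A, hA, hrk⟩ := exists_mprod_eq_of_path (fun k => W (a + k)) G m
    (fun k hk => hW _ (by simp only [mem_Icc] at hk ⊢; omega))
    (by simp [hG, show 0 < m by omega, s.trunc_zero, mprod_shift, hP])
    (fun k hk => by simpa [hG, hk] using hns _ (min_le_right _ _))
  refine ⟨fun l => A (l - a), ?_, fun l hl => ?_⟩
  · simpa [hG, ← mprod_shift] using hA
  · obtain ⟨k, rfl⟩ : ∃ k, l = a + k := ⟨l - a, by simp only [mem_Icc] at hl; omega⟩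
    have hk : k ∈ Icc 1 m := by simp only [mem_Icc] at hl ⊢; omega
    simpa using (hrk k hk).trans (hGstep k hk)

end Factorization

section UniformPartition

/-- Last layer of the `i`-th block of the uniform partition, so that
`P^u_i = {puEnd L Lbar (i - 1) + 1, …, puEnd L Lbar i}`. -/
def puEnd (L Lbar i : ℕ) : ℕ := if i = Lbar then L else i * (L / Lbar)

variable {L Lbar : ℕ}

lemma puEnd_zero (hLbar : 1 ≤ Lbar) : puEnd L Lbar 0 = 0 := by
  simp [puEnd, show 0 ≠ Lbar by omega]

lemma puEnd_self : puEnd L Lbar Lbar = L := if_pos rfl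

lemma puEnd_le {i : ℕ} (hi : i ≤ Lbar) : puEnd L Lbar i ≤ L := by
  unfold puEnd
  split_ifs
  · exact le_rfl
  · exact (Nat.mul_le_mul_right _ hi).trans (Nat.mul_div_le L Lbar)

lemma puEnd_add_le {i : ℕ} (hi : i < Lbar) : puEnd L Lbar i + L / Lbar ≤ puEnd L Lbar (i + 1) := by
  have h : (i + 1) * (L / Lbar) ≤ L := (Nat.mul_le_mul_right _ hi).trans (Nat.mul_div_le L Lbar)
  unfold puEnd
  simp only [add_mul, one_mul] at h ⊢
  split_ifs <;> omega

lemma puProd_succ (W : ℕ → Matrix (Fin D) (Fin D) ℝ) {i : ℕ} (hi : i < Lbar) :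
    puProd W L Lbar (i + 1) = mprod W (puEnd L Lbar i + 1) (puEnd L Lbar (i + 1)) := by
  simp [puProd, puEnd, hi.ne]

end UniformPartition

theorem lora_fnn_exact_uniform_partition_general (D L Lbar M : ℕ)
    (hLbar : 1 ≤ Lbar) (hLL : Lbar ≤ L) (hM : M = L / Lbar)
    (Wbar : ℕ → Matrix (Fin D) (Fin D) ℝ) (bbar : ℕ → Fin D → ℝ)
    (W : ℕ → Matrix (Fin D) (Fin D) ℝ)
    (R : ℕ)
    (sE : ∀ i, SVD (Wbar i - puProd W L Lbar i))
    (hWns : ∀ l ∈ Finset.Icc 1 L, (W l).det ≠ 0)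
    (hns : ∀ i ∈ Finset.Icc 1 Lbar, ∀ r ≤ R * (M - 1),
      (puProd W L Lbar i + (sE i).trunc r).det ≠ 0)
    (hR : (((Finset.Icc 1 Lbar).sup fun i => (Wbar i - puProd W L Lbar i).rank)
        + M - 1) / M ≤ R)
    (X : Set (Fin D → ℝ)) (hX : Bornology.IsBounded X) :
    ∃ (ΔW : ℕ → Matrix (Fin D) (Fin D) ℝ) (bhat : ℕ → Fin D → ℝ),
      (∀ l ∈ Finset.Icc 1 L, (ΔW l).rank ≤ R) ∧
      ∀ x ∈ X, fnn (fun l => W l + ΔW l) bhat L x = fnn Wbar bbar Lbar x := by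
  have hM1 : 1 ≤ M := hM ▸ (Nat.one_le_div_iff (by omega)).2 hLL
  have hblock : ∀ i < Lbar, ∃ A : ℕ → Matrix (Fin D) (Fin D) ℝ,
      mprod A (puEnd L Lbar i + 1) (puEnd L Lbar (i + 1)) = Wbar (i + 1) ∧
      ∀ l ∈ Icc (puEnd L Lbar i + 1) (puEnd L Lbar (i + 1)), (A l - W l).rank ≤ R := by
    intro i hi
    have hlen := hM ▸ puEnd_add_le (L := L) hi
    have hi' : i + 1 ∈ Icc 1 Lbar := mem_Icc.2 ⟨by omega, hi⟩
    have hrank : (Wbar (i + 1) - puProd W L Lbar (i + 1)).rank ≤ R * (M - 1) + R :=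
      calc _ ≤ _ := le_sup (f := fun i => (Wbar i - puProd W L Lbar i).rank) hi'
        _ ≤ M * R := (ceilDiv_le_iff_le_mul (by omega)).1 hR
        _ = R * (M - 1) + R := by rw [mul_comm, ← Nat.mul_add_one, Nat.sub_add_cancel hM1]
    refine exists_lowRank_adapters W (sE (i + 1)) (by omega) (puProd_succ W hi).symm
      (fun l hl => hWns l ?_) (Nat.mul_le_mul_left _ (by omega)) hrank (hns _ hi')
    have := puEnd_le (L := L) (i := i + 1) hi
    simp only [mem_Icc] at hl ⊢
    omega
  obtain ⟨A, b, hA, hAb⟩ := exists_fnn_eq_of_blockwise Wbar bbar (fun l A => (A - W l).rank ≤ R)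
    (puEnd L Lbar) Lbar (puEnd_zero hLbar)
    (fun i hi => by have := puEnd_add_le (L := L) hi; omega) hblock hX
  rw [puEnd_self] at hA hAb
  exact ⟨fun l => A l - W l, b, hA, by simpa using hAb⟩

/-- **Exact multi-layer FNN representation via LoRA (Theorem 1).**
Under the non-singularity Assumption 1 (uniform partition), if
`R ≥ ⌈max_i rank(W̄_i − ∏_{l∈P^u_i} W_l) / M⌉` then there are rank-`≤ R`
adapters and biases making the adapted `L`-layer model agree with the
`L̄`-layer target on the bounded input region `X`. -/
theorem lora_fnn_exact_uniform_partition (D L Lbar M : ℕ)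
    (hD : 1 ≤ D) (hLbar : 1 ≤ Lbar) (hLL : Lbar ≤ L) (hM : M = L / Lbar)
    (Wbar : ℕ → Matrix (Fin D) (Fin D) ℝ) (bbar : ℕ → Fin D → ℝ)
    (W : ℕ → Matrix (Fin D) (Fin D) ℝ)
    (R : ℕ) (hR1 : 1 ≤ R) (hRD : R ≤ D)
    (sE : ∀ i, SVD (Wbar i - puProd W L Lbar i))
    (hWns : ∀ l ∈ Finset.Icc 1 L, (W l).det ≠ 0)
    (hns : ∀ i ∈ Finset.Icc 1 Lbar, ∀ r ≤ R * (M - 1),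
      (puProd W L Lbar i + (sE i).trunc r).det ≠ 0)
    (hR : (((Finset.Icc 1 Lbar).sup fun i => (Wbar i - puProd W L Lbar i).rank)
        + M - 1) / M ≤ R)
    (X : Set (Fin D → ℝ)) (hX : Bornology.IsBounded X) :
    ∃ (ΔW : ℕ → Matrix (Fin D) (Fin D) ℝ) (bhat : ℕ → Fin D → ℝ),
      (∀ l ∈ Finset.Icc 1 L, (ΔW l).rank ≤ R) ∧
      ∀ x ∈ X, fnn (fun l => W l + ΔW l) bhat L x = fnn Wbar bbar Lbar x :=
  lora_fnn_exact_uniform_partition_general D L Lbar M hLbar hLL hM Wbar bbar W R sE hWns hns hR X hX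

end
end

section
/- Let the entries of (W̄_i)_{i=1}^{L̄} and (W_l)_{l=1}^{L} (L ≥ L̄) be mutually independent real random variables, each with a distribution absolutely continuous with respect to the Lebesgue measure on ℝ. If R ∈ {1, …, D} satisfies R ≥ D/M, then with probability 1 there exist matrices ΔW_1, …, ΔW_L ∈ ℝ^{D×D}, each of rank at most R, and bias vectors b̂_1, …, b̂_L ∈ ℝ^D, such that the adapted model f := FNN_{L,D}(·; (W_l + ΔW_l)_{l=1}^{L}, (b̂_l)_{l=1}^{L}) exactly matches the target model f̄ := FNN_{L̄,D}(·; (W̄_i)_{i=1}^{L̄}, (b̄_i)_{i=1}^{L̄}) on the bounded input region X, i.e., f(x) = f̄(x) for all x ∈ X. -/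
open Matrix MeasureTheory ProbabilityTheory Finset

noncomputable section

/-- The family of all entries of the target matrices `W̄_1, …, W̄_{L̄}` and the
frozen matrices `W_1, …, W_L`, as real random variables. -/
def entFam {D Lbar L : ℕ} {Ω : Type}
    (Wbar W : ℕ → Ω → Matrix (Fin D) (Fin D) ℝ) :
    ({i // i ∈ Finset.Icc 1 Lbar} ⊕ {l // l ∈ Finset.Icc 1 L}) × Fin D × Fin D →
      Ω → ℝ :=
  fun q ω =>
    Sum.elim (fun i => Wbar i.1 ω q.2.1 q.2.2) (fun l => W l.1 ω q.2.1 q.2.2) q.1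

namespace LoraAux

abbrev Mx (D : ℕ) := Matrix (Fin D) (Fin D) ℝ

/-- descending product `W (a+n) * ⋯ * W (a+1)`. -/
def pprod {M : Type*} [Monoid M] (W : ℕ → M) (a : ℕ) : ℕ → M
  | 0 => 1
  | n + 1 => W (a + n + 1) * pprod W a n

/-- ascending product `G 1 * G 2 * ⋯ * G n`. -/
def gmul {M : Type*} [Monoid M] (G : ℕ → M) : ℕ → M
  | 0 => 1
  | n + 1 => gmul G n * G (n + 1)

variable {M N : Type*} [Monoid M] [Monoid N]

lemma pprod_succ' (W : ℕ → M) (a n : ℕ) :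
    pprod W a (n + 1) = pprod W (a + 1) n * W (a + 1) := by
  induction n with
  | zero => simp [pprod]
  | succ n ih =>
      have h1 : a + (n + 1) + 1 = (a + 1) + n + 1 := by omega
      calc pprod W a (n + 2) = W (a + (n + 1) + 1) * pprod W a (n + 1) := rfl
        _ = W ((a + 1) + n + 1) * (pprod W (a + 1) n * W (a + 1)) := by rw [h1, ih]
        _ = pprod W (a + 1) (n + 1) * W (a + 1) := by rw [← mul_assoc]; rfl

lemma pprod_congr {W1 W2 : ℕ → M} {a n : ℕ}
    (h : ∀ l, a < l → l ≤ a + n → W1 l = W2 l) :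
    pprod W1 a n = pprod W2 a n := by
  induction n with
  | zero => rfl
  | succ n ih =>
      show W1 (a + n + 1) * pprod W1 a n = W2 (a + n + 1) * pprod W2 a n
      rw [h _ (by omega) (by omega), ih (fun l h1 h2 => h l h1 (by omega))]

lemma pprod_hom (f : M →* N) (W : ℕ → M) (a n : ℕ) :
    f (pprod W a n) = pprod (fun l => f (W l)) a n := by
  induction n with
  | zero => exact f.map_one
  | succ n ih => show f (W (a+n+1) * pprod W a n) = _; rw [f.map_mul, ih]; rfl

lemma pprod_one (a n : ℕ) : pprod (fun _ => (1 : M)) a n = 1 := by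
  induction n with
  | zero => rfl
  | succ n ih => show 1 * pprod (fun _ => (1:M)) a n = 1; rw [one_mul, ih]

lemma gmul_eq_of_eq_one {G : ℕ → M} {m : ℕ} (h : ∀ j, m < j → G j = 1) :
    ∀ m', m ≤ m' → gmul G m' = gmul G m := by
  intro m'
  induction m' with
  | zero => intro hm; rw [Nat.le_zero.mp hm]
  | succ n ih =>
      intro hm
      rcases Nat.eq_or_lt_of_le hm with h1 | h1
      · rw [h1]
      · have h2 : m ≤ n := by omega
        show gmul G n * G (n+1) = gmul G m
        rw [h _ (by omega), mul_one, ih h2]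


section Det

variable {D : ℕ}

lemma det_pprod (W : ℕ → Mx D) (a n : ℕ) :
    (pprod W a n).det = pprod (fun l => (W l).det) a n :=
  pprod_hom (Matrix.detMonoidHom) W a n

lemma isUnit_pprod_det {W : ℕ → Mx D} {a n : ℕ}
    (h : ∀ l, a < l → l ≤ a + n → IsUnit (W l).det) :
    IsUnit (pprod W a n).det := by
  induction n with
  | zero => simp [pprod]
  | succ n ih =>
      show IsUnit (W (a+n+1) * pprod W a n).det
      rw [Matrix.det_mul]
      exact (h _ (by omega) (by omega)).mul
        (ih fun l h1 h2 => h l h1 (by omega))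

lemma isUnit_det_of_pprod {W : ℕ → Mx D} {a n : ℕ}
    (h : IsUnit (pprod W a n).det) :
    ∀ l, a < l → l ≤ a + n → IsUnit (W l).det := by
  induction n with
  | zero => intro l h1 h2; omega
  | succ n ih =>
      intro l h1 h2
      have h3 : (W (a+n+1) * pprod W a n).det = (W (a+n+1)).det * (pprod W a n).det :=
        Matrix.det_mul _ _
      have h4 : IsUnit ((W (a+n+1)).det * (pprod W a n).det) := by
        rw [← h3]; exact h
      rcases IsUnit.mul_iff.mp h4 with ⟨hu1, hu2⟩
      rcases Nat.eq_or_lt_of_le h2 with h5 | h5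
      · rwa [h5]
      · exact ih hu2 l h1 (by omega)

/-- `mix R k X Y` : rows `i < k*R` come from `X`, the rest from `Y`. -/
def mix {α : Type*} (R k : ℕ) (X Y : Matrix (Fin D) (Fin D) α) :
    Matrix (Fin D) (Fin D) α :=
  Matrix.of fun i j => if (i : ℕ) < k * R then X i j else Y i j

lemma mix_apply {α : Type*} (R k : ℕ) (X Y : Matrix (Fin D) (Fin D) α) (i j : Fin D) :
    mix R k X Y i j = if (i : ℕ) < k * R then X i j else Y i j := rfl

lemma mix_mul {α : Type*} [CommRing α] (R k : ℕ) (X Y A : Matrix (Fin D) (Fin D) α) :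
    mix R k X Y * A = mix R k (X * A) (Y * A) := by
  ext i j
  by_cases h : (i : ℕ) < k * R <;>
    simp [mix, Matrix.mul_apply, h]

lemma mix_map {α β : Type*} [CommRing α] [CommRing β] (f : α →+* β)
    (R k : ℕ) (X Y : Matrix (Fin D) (Fin D) α) :
    (mix R k X Y).map f = mix R k (X.map f) (Y.map f) := by
  ext i j
  by_cases h : (i : ℕ) < k * R <;> simp [mix, Matrix.map_apply, h]

lemma mix_one {α : Type*} [CommRing α] [DecidableEq α] (R k : ℕ) :
    mix R k (1 : Matrix (Fin D) (Fin D) α) 1 = 1 := by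
  ext i j
  by_cases h : (i : ℕ) < k * R <;> simp [mix, h]

lemma mix_zero_left {α : Type*} [CommRing α] (X Y : Matrix (Fin D) (Fin D) α) (R : ℕ) :
    mix R 0 X Y = Y := by
  ext i j; simp [mix]

end Det

section Key

variable {D : ℕ}

lemma rank_blockdiag_le (R k : ℕ) (hk : 1 ≤ k) :
    (Matrix.diagonal (fun i : Fin D =>
      if (k-1)*R ≤ (i:ℕ) ∧ (i:ℕ) < k*R then (1:ℝ) else 0)).rank ≤ R := by
  classical
  rw [Matrix.rank_diagonal]
  rw [Fintype.card_subtype]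
  have hinj : Set.InjOn (fun i : Fin D => (i : ℕ))
      ↑(Finset.univ.filter fun i : Fin D =>
        (if (k-1)*R ≤ (i:ℕ) ∧ (i:ℕ) < k*R then (1:ℝ) else 0) ≠ 0) := by
    intro x _ y _ hxy
    exact Fin.val_injective hxy
  have hmap : ∀ i ∈ (Finset.univ.filter fun i : Fin D =>
      (if (k-1)*R ≤ (i:ℕ) ∧ (i:ℕ) < k*R then (1:ℝ) else 0) ≠ 0),
      (i : ℕ) ∈ Finset.Ico ((k-1)*R) (k*R) := by
    intro i hi
    simp only [Finset.mem_filter, Finset.mem_univ, true_and] at hi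
    by_cases h : (k-1)*R ≤ (i:ℕ) ∧ (i:ℕ) < k*R
    · simp [Finset.mem_Ico, h.1, h.2]
    · simp [h] at hi
  have := Finset.card_le_card_of_injOn _ hmap hinj
  refine le_trans this ?_
  rw [Nat.card_Ico]
  obtain ⟨t, rfl⟩ : ∃ t, k = t + 1 := ⟨k - 1, by omega⟩
  have : (t+1)*R = t*R + R := by ring
  simp only [Nat.add_sub_cancel, this]
  omega

theorem key_factor (M R : ℕ) (hMR : D ≤ M * R) (P : Mx D)
    (hinv : ∀ k, 1 ≤ k → k ≤ M → IsUnit (mix R k (1 : Mx D) P).det) :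
    ∃ G : ℕ → Mx D, (∀ j, (G j - 1).rank ≤ R) ∧ (∀ j, M < j → G j = 1) ∧
      gmul G M = P := by
  classical
  set Pk : ℕ → Mx D := fun k => mix R k (1 : Mx D) P with hPk
  set E : ℕ → Mx D := fun k => Matrix.diagonal (fun i : Fin D =>
      if (k-1)*R ≤ (i:ℕ) ∧ (i:ℕ) < k*R then (1:ℝ) else 0) with hE
  set G : ℕ → Mx D := fun j =>
    if h : 1 ≤ j ∧ j ≤ M then 1 + E j * ((P - 1) * (Pk j)⁻¹) else 1 with hG
  have hstep : ∀ j, 1 ≤ j → j ≤ M → G j * Pk j = Pk (j - 1) := by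
    intro j h1 h2
    have hGj : G j = 1 + E j * ((P - 1) * (Pk j)⁻¹) := by
      rw [hG]; simp [h1, h2]
    rw [hGj, add_mul, one_mul, mul_assoc, mul_assoc,
      Matrix.nonsing_inv_mul _ (hinv j h1 h2), mul_one]
    obtain ⟨t, rfl⟩ : ∃ t, j = t + 1 := ⟨j - 1, by omega⟩
    ext i jj
    have htR : t * R ≤ (t+1) * R := by nlinarith
    simp only [Matrix.add_apply, Matrix.diagonal_mul, hE, Nat.add_sub_cancel]
    by_cases hc1 : (i : ℕ) < t * R
    · have hc2 : (i : ℕ) < (t+1) * R := by omega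
      have hc3 : ¬ (t * R ≤ (i:ℕ) ∧ (i:ℕ) < (t+1)*R) := by omega
      simp [hPk, mix_apply, hc1, hc2, hc3]
    · by_cases hc2 : (i : ℕ) < (t+1) * R
      · have hc3 : t * R ≤ (i:ℕ) ∧ (i:ℕ) < (t+1)*R := by omega
        simp only [hPk, mix_apply, Matrix.of_apply, hc1, hc2, if_true, if_false,
          hc3, and_self, ite_true, one_mul, Matrix.sub_apply]
        ring
      · have hc3 : ¬ (t * R ≤ (i:ℕ) ∧ (i:ℕ) < (t+1)*R) := by omega
        simp [hPk, mix_apply, hc1, hc2, hc3]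
  have hchain : ∀ m, m ≤ M → gmul G m * Pk m = P := by
    intro m
    induction m with
    | zero =>
        intro _
        show (1 : Mx D) * Pk 0 = P
        rw [one_mul]
        show mix R 0 (1 : Mx D) P = P
        rw [mix_zero_left]
    | succ n ih =>
        intro hn
        show gmul G n * G (n+1) * Pk (n+1) = P
        rw [mul_assoc, hstep (n+1) (by omega) hn]
        simpa using ih (by omega)
  have hPkM : Pk M = 1 := by
    ext i j
    have : (i : ℕ) < M * R := lt_of_lt_of_le i.isLt hMR
    simp [hPk, mix_apply, this]
  refine ⟨G, ?_, ?_, ?_⟩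
  · intro j
    by_cases h : 1 ≤ j ∧ j ≤ M
    · have hGj : G j = 1 + E j * ((P - 1) * (Pk j)⁻¹) := by rw [hG]; simp [h.1, h.2]
      rw [hGj, add_sub_cancel_left]
      exact le_trans (Matrix.rank_mul_le_left _ _) (rank_blockdiag_le R j h.1)
    · have hGj : G j = 1 := by rw [hG]; simp [h]
      rw [hGj, sub_self, Matrix.rank_zero]
      omega
  · intro j hj
    rw [hG]; simp; omega
  · have := hchain M le_rfl
    rwa [hPkM, mul_one] at this

end Key

section Factor

variable {D : ℕ}

theorem factor_lemma (Rk : ℕ) :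
    ∀ (m a : ℕ) (W G : ℕ → Mx D),
      (∀ l, a < l → l ≤ a + m → IsUnit (W l).det) →
      (∀ j, (G j - 1).rank ≤ Rk) →
      ∃ Q : ℕ → Mx D, (∀ l, (Q l - W l).rank ≤ Rk) ∧
        pprod Q a m = gmul G m * pprod W a m := by
  intro m
  induction m with
  | zero =>
      intro a W G _ _
      refine ⟨W, fun l => ?_, ?_⟩
      · rw [sub_self, Matrix.rank_zero]; omega
      · show pprod W a 0 = gmul G 0 * pprod W a 0
        rw [show gmul G 0 = (1 : Mx D) from rfl, one_mul]
  | succ m ih =>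
      intro a W G hW hG
      obtain ⟨Q₀, hQ₀r, hQ₀p⟩ := ih (a+1) W G
        (fun l h1 h2 => hW l (by omega) (by omega)) hG
      set C : Mx D := pprod W (a+1) m with hC
      have hCu : IsUnit C.det :=
        isUnit_pprod_det (fun l h1 h2 => hW l (by omega) (by omega))
      set Qa : Mx D := C⁻¹ * (G (m+1) * (C * W (a+1))) with hQa
      set Q : ℕ → Mx D := fun l => if l = a + 1 then Qa else Q₀ l with hQdef
      have hQtop : Q (a+1) = Qa := by rw [hQdef]; simp
      have hQagree : pprod Q (a+1) m = pprod Q₀ (a+1) m :=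
        pprod_congr (fun l h1 h2 => by rw [hQdef]; simp [show l ≠ a + 1 by omega])
      refine ⟨Q, ?_, ?_⟩
      · intro l
        by_cases hl : l = a + 1
        · subst hl
          rw [hQtop]
          have hsub : Qa - W (a+1) = C⁻¹ * ((G (m+1) - 1) * (C * W (a+1))) := by
            rw [hQa, Matrix.sub_mul, Matrix.mul_sub, one_mul,
              ← Matrix.mul_assoc C⁻¹ C (W (a+1)), Matrix.nonsing_inv_mul _ hCu, one_mul]
          rw [hsub]
          exact le_trans (Matrix.rank_mul_le_right _ _)
            (le_trans (Matrix.rank_mul_le_left _ _) (hG (m+1)))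
        · have : Q l = Q₀ l := by rw [hQdef]; simp [hl]
          rw [this]; exact hQ₀r l
      · rw [pprod_succ', hQagree, hQ₀p, hQtop, hQa]
        rw [pprod_succ' W a m, ← hC]
        show gmul G m * C * (C⁻¹ * (G (m+1) * (C * W (a+1))))
            = gmul G m * G (m+1) * (C * W (a+1))
        rw [Matrix.mul_assoc (gmul G m) C _, ← Matrix.mul_assoc C C⁻¹ _,
          Matrix.mul_nonsing_inv _ hCu, one_mul, ← Matrix.mul_assoc]

theorem group_exists (M R : ℕ) (hMR : D ≤ M * R) (a m : ℕ) (hm : M ≤ m)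
    (W : ℕ → Mx D) (T : Mx D)
    (hA : IsUnit (pprod W a m).det)
    (hN : ∀ k, 1 ≤ k → k ≤ M → IsUnit (mix R k (pprod W a m) T).det) :
    ∃ Q : ℕ → Mx D, (∀ l, (Q l - W l).rank ≤ R) ∧ pprod Q a m = T := by
  set A : Mx D := pprod W a m with hAdef
  set P : Mx D := T * A⁻¹ with hPdef
  have hPA : P * A = T := by
    rw [hPdef, Matrix.mul_assoc, Matrix.nonsing_inv_mul _ hA, mul_one]
  have hPk : ∀ k, 1 ≤ k → k ≤ M → IsUnit (mix R k (1 : Mx D) P).det := by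
    intro k h1 h2
    have hmm : mix R k (1 : Mx D) P * A = mix R k A T := by
      rw [mix_mul, one_mul, hPA]
    have h4 : IsUnit ((mix R k (1 : Mx D) P).det * A.det) := by
      rw [← Matrix.det_mul, hmm]; exact hN k h1 h2
    exact (IsUnit.mul_iff.mp h4).1
  obtain ⟨G, hGrank, hGone, hGmul⟩ := key_factor M R hMR P hPk
  have hgm : gmul G m = P := by rw [gmul_eq_of_eq_one hGone m hm, hGmul]
  obtain ⟨Q, hQr, hQp⟩ := factor_lemma R m a W G (isUnit_det_of_pprod hA) hGrank
  exact ⟨Q, hQr, by rw [hQp, hgm, ← hAdef, hPA]⟩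

end Factor

end LoraAux


namespace LoraAux

section Net

variable {D : ℕ}

/-- run layers `a+1 .. a+n`. -/
def runF (Q : ℕ → Mx D) (β : ℕ → Fin D → ℝ) (a : ℕ) : ℕ → (Fin D → ℝ) → (Fin D → ℝ)
  | 0, z => z
  | n + 1, z => reluVec ((Q (a + n + 1)).mulVec (runF Q β a n z) + β (a + n + 1))

lemma fnn_eq_runF (Q : ℕ → Mx D) (β : ℕ → Fin D → ℝ) (n : ℕ) (x : Fin D → ℝ) :
    fnn Q β n x = runF Q β 0 n x := by
  induction n with
  | zero => rfl
  | succ n ih => show reluVec _ = reluVec _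
                 rw [ih]; simp [runF, Nat.zero_add]

lemma runF_add (Q : ℕ → Mx D) (β : ℕ → Fin D → ℝ) (a n : ℕ) :
    ∀ (k : ℕ) (z : Fin D → ℝ),
      runF Q β a (n + k) z = runF Q β (a + n) k (runF Q β a n z) := by
  intro k
  induction k with
  | zero => intro z; rfl
  | succ k ih =>
      intro z
      show reluVec ((Q (a + (n + k) + 1)).mulVec (runF Q β a (n+k) z) + β (a + (n+k) + 1)) = _
      rw [ih]
      show _ = reluVec ((Q (a + n + k + 1)).mulVec (runF Q β (a+n) k _) + β (a + n + k + 1))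
      have h : a + (n + k) = a + n + k := by omega
      rw [h]

lemma runF_congr (Q : ℕ → Mx D) {β1 β2 : ℕ → Fin D → ℝ} (a : ℕ) :
    ∀ (n : ℕ), (∀ l, a < l → l ≤ a + n → β1 l = β2 l) →
      ∀ z, runF Q β1 a n z = runF Q β2 a n z := by
  intro n
  induction n with
  | zero => intro _ z; rfl
  | succ n ih =>
      intro h z
      show reluVec _ = reluVec _
      rw [ih (fun l h1 h2 => h l h1 (by omega)) z, h (a+n+1) (by omega) (by omega)]

lemma reluVec_of_nonneg {v : Fin D → ℝ} (h : ∀ i, 0 ≤ v i) : reluVec v = v := by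
  funext i
  exact max_eq_left (h i)

/-- sum of absolute values of all entries -/
def absSum (B : Mx D) : ℝ := ∑ i : Fin D, ∑ j : Fin D, |B i j|

lemma absSum_nonneg (B : Mx D) : 0 ≤ absSum B :=
  Finset.sum_nonneg fun i _ => Finset.sum_nonneg fun j _ => abs_nonneg _

lemma mulVec_bound (B : Mx D) {r : ℝ} (hr : 0 ≤ r) {z : Fin D → ℝ}
    (hz : ∀ i, |z i| ≤ r) (i : Fin D) : |(B.mulVec z) i| ≤ absSum B * r := by
  have h0 : (B.mulVec z) i = ∑ j : Fin D, B i j * z j := rfl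
  rw [h0]
  have h1 : |∑ j : Fin D, B i j * z j| ≤ ∑ j : Fin D, |B i j| * r := by
    refine le_trans (Finset.abs_sum_le_sum_abs _ _) ?_
    refine Finset.sum_le_sum fun j _ => ?_
    rw [abs_mul]
    exact mul_le_mul_of_nonneg_left (hz j) (abs_nonneg _)
  refine le_trans h1 ?_
  rw [← Finset.sum_mul]
  refine mul_le_mul_of_nonneg_right ?_ hr
  exact Finset.single_le_sum (f := fun i => ∑ j : Fin D, |B i j|)
    (fun i _ => Finset.sum_nonneg fun j _ => abs_nonneg _) (Finset.mem_univ i)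

lemma lin_exists (Q : ℕ → Mx D) (a : ℕ) (Y : Set (Fin D → ℝ)) (r : ℝ) (hr : 0 ≤ r)
    (hY : ∀ z ∈ Y, ∀ i, |z i| ≤ r) :
    ∀ n, ∃ (β : ℕ → Fin D → ℝ) (c : ℝ),
      ∀ z ∈ Y, runF Q β a n z = (pprod Q a n).mulVec z + (fun _ => c) := by
  intro n
  induction n with
  | zero =>
      refine ⟨fun _ => 0, 0, fun z _ => ?_⟩
      show z = (1 : Mx D).mulVec z + (fun _ => (0:ℝ))
      funext i
      simp [Matrix.one_mulVec]
  | succ n ih =>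
      obtain ⟨β, c, hβ⟩ := ih
      set B' : Mx D := pprod Q a (n+1) with hB'
      set c' : ℝ := absSum B' * r with hc'
      set β' : ℕ → Fin D → ℝ := Function.update β (a+n+1)
        ((fun _ => c') - (Q (a+n+1)).mulVec (fun _ => c)) with hβ'
      refine ⟨β', c', fun z hz => ?_⟩
      have hprev : runF Q β' a n z = (pprod Q a n).mulVec z + (fun _ => c) := by
        have hcongr : runF Q β' a n z = runF Q β a n z :=
          runF_congr Q a n (fun l h1 h2 => by
            rw [hβ']; exact Function.update_of_ne (by omega) _ β) z
        rw [hcongr]; exact hβ z hz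
      show reluVec ((Q (a+n+1)).mulVec (runF Q β' a n z) + β' (a+n+1)) = _
      have hupd : β' (a+n+1) = (fun _ => c') - (Q (a+n+1)).mulVec (fun _ => c) := by
        rw [hβ']; exact Function.update_self _ _ _
      have hpre : (Q (a+n+1)).mulVec (runF Q β' a n z) + β' (a+n+1)
          = B'.mulVec z + (fun _ => c') := by
        rw [hprev, hupd, Matrix.mulVec_add, Matrix.mulVec_mulVec]
        rw [hB']
        show (pprod Q a (n+1)).mulVec z + (Q (a+n+1)).mulVec (fun _ => c)
            + ((fun _ => c') - (Q (a+n+1)).mulVec (fun _ => c))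
            = (pprod Q a (n+1)).mulVec z + (fun _ => c')
        abel
      rw [hpre]
      refine reluVec_of_nonneg fun i => ?_
      have hh := abs_le.mp (mulVec_bound B' hr (hY z hz) i)
      show 0 ≤ (B'.mulVec z) i + c'
      rw [hc']
      linarith [hh.1]

lemma group_net (Q : ℕ → Mx D) (a n : ℕ) (hn : 1 ≤ n) (Y : Set (Fin D → ℝ))
    (r : ℝ) (hr : 0 ≤ r) (hY : ∀ z ∈ Y, ∀ i, |z i| ≤ r) (bb : Fin D → ℝ) :
    ∃ β : ℕ → Fin D → ℝ, ∀ z ∈ Y,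
      runF Q β a n z = reluVec ((pprod Q a n).mulVec z + bb) := by
  obtain ⟨n', rfl⟩ : ∃ n', n = n' + 1 := ⟨n - 1, by omega⟩
  obtain ⟨β, c, hβ⟩ := lin_exists Q a Y r hr hY n'
  set β' : ℕ → Fin D → ℝ := Function.update β (a+n'+1)
    (bb - (Q (a+n'+1)).mulVec (fun _ => c)) with hβ'
  refine ⟨β', fun z hz => ?_⟩
  have hprev : runF Q β' a n' z = (pprod Q a n').mulVec z + (fun _ => c) := by
    have hcongr : runF Q β' a n' z = runF Q β a n' z :=
      runF_congr Q a n' (fun l h1 h2 => by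
        rw [hβ']; exact Function.update_of_ne (by omega) _ β) z
    rw [hcongr]; exact hβ z hz
  show reluVec ((Q (a+n'+1)).mulVec (runF Q β' a n' z) + β' (a+n'+1)) = _
  have hupd : β' (a+n'+1) = bb - (Q (a+n'+1)).mulVec (fun _ => c) := by
    rw [hβ']; exact Function.update_self _ _ _
  have harg : (Q (a+n'+1)).mulVec (runF Q β' a n' z) + β' (a+n'+1)
      = (pprod Q a (n'+1)).mulVec z + bb := by
    rw [hprev, hupd, Matrix.mulVec_add, Matrix.mulVec_mulVec]
    show (pprod Q a (n'+1)).mulVec z + (Q (a+n'+1)).mulVec (fun _ => c)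
        + (bb - (Q (a+n'+1)).mulVec (fun _ => c)) = (pprod Q a (n'+1)).mulVec z + bb
    abel
  rw [harg]

lemma fnn_bound (Wb : ℕ → Mx D) (bb : ℕ → Fin D → ℝ) (X : Set (Fin D → ℝ))
    (hX : Bornology.IsBounded X) :
    ∀ n, ∃ r : ℝ, 0 ≤ r ∧ ∀ x ∈ X, ∀ i, |fnn Wb bb n x i| ≤ r := by
  intro n
  induction n with
  | zero =>
      obtain ⟨r0, hr0⟩ := Bornology.IsBounded.exists_norm_le hX
      refine ⟨max r0 0, le_max_right _ _, fun x hx i => ?_⟩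
      have h1 : |x i| ≤ ‖x‖ := by
        simpa [Real.norm_eq_abs] using norm_le_pi_norm x i
      exact le_trans h1 (le_trans (hr0 x hx) (le_max_left _ _))
  | succ n ih =>
      obtain ⟨r, hr, hb⟩ := ih
      set Sb : ℝ := ∑ i : Fin D, |bb (n+1) i| with hSb
      have hSbnn : 0 ≤ Sb := Finset.sum_nonneg fun i _ => abs_nonneg _
      refine ⟨absSum (Wb (n+1)) * r + Sb,
        add_nonneg (mul_nonneg (absSum_nonneg _) hr) hSbnn, fun x hx i => ?_⟩
      show |max (((Wb (n+1)).mulVec (fnn Wb bb n x) + bb (n+1)) i) 0| ≤ _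
      have h1 : |max (((Wb (n+1)).mulVec (fnn Wb bb n x) + bb (n+1)) i) 0|
          ≤ |((Wb (n+1)).mulVec (fnn Wb bb n x) + bb (n+1)) i| := by
        rcases le_total (((Wb (n+1)).mulVec (fnn Wb bb n x) + bb (n+1)) i) 0 with h | h
        · rw [max_eq_right h]; simp [abs_nonneg]
        · rw [max_eq_left h]
      refine le_trans h1 ?_
      have h2 : ((Wb (n+1)).mulVec (fnn Wb bb n x) + bb (n+1)) i
          = ((Wb (n+1)).mulVec (fnn Wb bb n x)) i + bb (n+1) i := rfl
      rw [h2]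
      have h3 := mulVec_bound (Wb (n+1)) hr (hb x hx) i
      have h4 : |bb (n+1) i| ≤ Sb :=
        Finset.single_le_sum (f := fun i => |bb (n+1) i|)
          (fun i _ => abs_nonneg _) (Finset.mem_univ i)
      calc |((Wb (n+1)).mulVec (fnn Wb bb n x)) i + bb (n+1) i|
          ≤ |((Wb (n+1)).mulVec (fnn Wb bb n x)) i| + |bb (n+1) i| := abs_add_le _ _
        _ ≤ absSum (Wb (n+1)) * r + Sb := add_le_add h3 h4

theorem net_assemble (Q Wb : ℕ → Mx D) (bb : ℕ → Fin D → ℝ) (t : ℕ → ℕ)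
    (ht0 : t 0 = 0) (X : Set (Fin D → ℝ)) (hX : Bornology.IsBounded X) :
    ∀ Lb : ℕ, (∀ i, i < Lb → t i < t (i+1)) →
      (∀ i, i < Lb → pprod Q (t i) (t (i+1) - t i) = Wb (i+1)) →
      ∃ β : ℕ → Fin D → ℝ, ∀ x ∈ X, runF Q β 0 (t Lb) x = fnn Wb bb Lb x := by
  intro Lb
  induction Lb with
  | zero =>
      intro _ _
      refine ⟨fun _ => 0, fun x hx => ?_⟩
      rw [ht0]; rfl
  | succ Lb ih =>
      intro hmono hgr
      obtain ⟨β0, hβ0⟩ := ih (fun i hi => hmono i (by omega)) (fun i hi => hgr i (by omega))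
      obtain ⟨r, hr, hb⟩ := fnn_bound Wb bb X hX Lb
      set Y : Set (Fin D → ℝ) := fnn Wb bb Lb '' X with hY
      have hYb : ∀ z ∈ Y, ∀ i, |z i| ≤ r := by
        rintro z ⟨x, hx, rfl⟩ i
        exact hb x hx i
      set nn : ℕ := t (Lb+1) - t Lb with hnn
      have hnn1 : 1 ≤ nn := by have := hmono Lb (by omega); omega
      obtain ⟨β1, hβ1⟩ := group_net Q (t Lb) nn hnn1 Y r hr hYb (bb (Lb+1))
      set βn : ℕ → Fin D → ℝ := fun l => if l ≤ t Lb then β0 l else β1 l with hβn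
      refine ⟨βn, fun x hx => ?_⟩
      have hsplit : t (Lb+1) = t Lb + nn := by have := hmono Lb (by omega); omega
      rw [hsplit, runF_add, Nat.zero_add]
      have hinner : runF Q βn 0 (t Lb) x = fnn Wb bb Lb x := by
        have hcongr : runF Q βn 0 (t Lb) x = runF Q β0 0 (t Lb) x :=
          runF_congr Q 0 (t Lb) (fun l h1 h2 => by
            have hl : l ≤ t Lb := by omega
            simp [hβn, hl]) x
        rw [hcongr]; exact hβ0 x hx
      rw [hinner]
      have houter : runF Q βn (t Lb) nn (fnn Wb bb Lb x)
          = runF Q β1 (t Lb) nn (fnn Wb bb Lb x) := by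
        refine runF_congr Q (t Lb) nn (fun l h1 h2 => ?_) _
        have hl : ¬ l ≤ t Lb := by omega
        simp [hβn, hl]
      rw [houter, hβ1 _ ⟨x, hx, rfl⟩, hgr Lb (by omega)]
      rfl

end Net

end LoraAux



namespace LoraAux

section Meas

open MvPolynomial

lemma measurable_eval {σ : Type*} (p : MvPolynomial σ ℝ) :
    Measurable fun v : σ → ℝ => MvPolynomial.eval v p := by
  induction p using MvPolynomial.induction_on with
  | C a => simpa using measurable_const
  | add p q hp hq => simp only [map_add]; exact hp.add hq
  | mul_X p i hp => simp only [map_mul, eval_X]; exact hp.mul (measurable_pi_apply i)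

theorem joint_eq_pi {Ω : Type} [MeasurableSpace Ω] (μ : Measure Ω) [IsProbabilityMeasure μ]
    {ι : Type} [Fintype ι] (f : ι → Ω → ℝ) (hmeas : ∀ i, Measurable (f i))
    (hind : iIndepFun f μ) :
    μ.map (fun ω i => f i ω) = Measure.pi (fun i => μ.map (f i)) := by
  haveI : ∀ i, IsProbabilityMeasure (μ.map (f i)) :=
    fun i => Measure.isProbabilityMeasure_map (hmeas i).aemeasurable
  refine (Measure.pi_eq fun s hs => ?_).symm
  rw [Measure.map_apply (measurable_pi_lambda _ hmeas) (MeasurableSet.univ_pi hs)]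
  have h1 : (fun ω i => f i ω) ⁻¹' (Set.pi Set.univ s) = ⋂ i ∈ Finset.univ, f i ⁻¹' s i := by
    ext ω; simp [Set.mem_pi]
  rw [h1, hind.measure_inter_preimage_eq_mul Finset.univ (fun i _ => hs i)]
  refine Finset.prod_congr rfl fun i _ => ?_
  rw [Measure.map_apply (hmeas i) (hs i)]

theorem polynull : ∀ (n : ℕ) (p : MvPolynomial (Fin n) ℝ), p ≠ 0 →
    ∀ (ν : Fin n → Measure ℝ), (∀ i, IsProbabilityMeasure (ν i)) →
      (∀ i, ν i ≪ (volume : Measure ℝ)) →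
    Measure.pi ν {v | MvPolynomial.eval v p = 0} = 0 := by
  intro n
  induction n with
  | zero =>
      intro p hp ν _ _
      obtain ⟨r, rfl⟩ := MvPolynomial.C_surjective (Fin 0) p
      have hr : r ≠ 0 := fun h => hp (by rw [h, map_zero])
      have hempty : {v : Fin 0 → ℝ | MvPolynomial.eval v (MvPolynomial.C r) = 0} = ∅ := by
        ext v; simp [hr]
      rw [hempty]; simp
  | succ n ih =>
      intro p hp ν hprob hac
      haveI := hprob
      set q := MvPolynomial.finSuccEquiv ℝ n p with hqdef
      have hq0 : q ≠ 0 := by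
        intro h
        apply hp
        have h2 := congrArg (MvPolynomial.finSuccEquiv ℝ n).symm h
        simpa [hqdef] using h2
      have hlead : q.coeff q.natDegree ≠ 0 := by
        rw [← Polynomial.leadingCoeff]
        exact Polynomial.leadingCoeff_ne_zero.mpr hq0
      set νt : Fin n → Measure ℝ := fun j => ν ((0 : Fin (n+1)).succAbove j) with hνt
      haveI : ∀ j, IsProbabilityMeasure (νt j) := fun j => hprob _
      set e := MeasurableEquiv.piFinSuccAbove (fun _ : Fin (n+1) => ℝ) 0 with he
      have hmp1 : MeasurePreserving e (Measure.pi ν) ((ν 0).prod (Measure.pi νt)) :=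
        measurePreserving_piFinSuccAbove ν 0
      have hcomp : MeasurePreserving (Prod.swap ∘ e) (Measure.pi ν)
          ((Measure.pi νt).prod (ν 0)) :=
        (Measure.measurePreserving_swap).comp hmp1
      set T : Set ((Fin n → ℝ) × ℝ) :=
        {w | MvPolynomial.eval (Fin.cons w.2 w.1 : Fin (n+1) → ℝ) p = 0} with hT
      have hcons : Measurable fun w : (Fin n → ℝ) × ℝ => (Fin.cons w.2 w.1 : Fin (n+1) → ℝ) := by
        refine measurable_pi_lambda _ (fun i => ?_)
        refine Fin.cases ?_ (fun j => ?_) i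
        · simpa using measurable_snd
        · simp only [Fin.cons_succ]; exact (measurable_pi_apply j).comp measurable_fst
      have hTmeas : MeasurableSet T :=
        ((measurable_eval p).comp hcons) (measurableSet_singleton 0)
      have hesymm : ∀ w : ℝ × (Fin n → ℝ), e.symm w = Fin.cons w.1 w.2 := by
        intro w
        rw [he]
        show ((MeasurableEquiv.piFinSuccAbove (fun _ : Fin (n+1) => ℝ) 0).symm) w = _
        simp [MeasurableEquiv.piFinSuccAbove, Fin.insertNth_zero', Fin.consEquiv]
      have hSeq : {v : Fin (n+1) → ℝ | MvPolynomial.eval v p = 0} = (Prod.swap ∘ e) ⁻¹' T := by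
        ext v
        simp only [Set.mem_preimage, Function.comp_apply, hT, Set.mem_setOf_eq]
        have h1 : (Fin.cons (Prod.swap (e v)).2 (Prod.swap (e v)).1 : Fin (n+1) → ℝ) = v := by
          have h2 : (Prod.swap (e v)).2 = (e v).1 := rfl
          have h3 : (Prod.swap (e v)).1 = (e v).2 := rfl
          rw [h2, h3]
          have h4 := hesymm (e v)
          rw [e.symm_apply_apply] at h4
          exact h4.symm
        rw [h1]
      have hkey : (Measure.pi νt).prod (ν 0) T = 0 := by
        rw [Measure.measure_prod_null hTmeas]
        have hcoefnull : Measure.pi νt {v | MvPolynomial.eval v (q.coeff q.natDegree) = 0} = 0 :=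
          ih (q.coeff q.natDegree) hlead νt (fun j => hprob _) (fun j => hac _)
        have hae : ∀ᵐ v ∂(Measure.pi νt),
            MvPolynomial.eval v (q.coeff q.natDegree) ≠ 0 := by
          rw [ae_iff]
          simpa using hcoefnull
        filter_upwards [hae] with v hv
        set q' : Polynomial ℝ := Polynomial.map (MvPolynomial.eval v) q with hq'
        have hq'0 : q' ≠ 0 := by
          intro h
          apply hv
          have := congrArg (fun r => Polynomial.coeff r q.natDegree) h
          simpa [hq', Polynomial.coeff_map] using this
        have hslice : (Prod.mk v ⁻¹' T) = {y : ℝ | Polynomial.eval y q' = 0} := by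
          ext y
          simp only [Set.mem_preimage, hT, Set.mem_setOf_eq]
          rw [MvPolynomial.eval_eq_eval_mv_eval']
        have hfin : Set.Finite {y : ℝ | Polynomial.eval y q' = 0} :=
          Polynomial.finite_setOf_isRoot hq'0
        show ν 0 (Prod.mk v ⁻¹' T) = 0
        rw [hslice]
        exact hac 0 (hfin.measure_zero _)
      rw [hSeq, hcomp.measure_preimage hTmeas.nullMeasurableSet, hkey]

end Meas

end LoraAux



namespace LoraAux

section Meas2

open MvPolynomial

theorem polynull' {ι : Type} [Fintype ι] (p : MvPolynomial ι ℝ) (hp : p ≠ 0)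
    (ν : ι → Measure ℝ) (hprob : ∀ i, IsProbabilityMeasure (ν i))
    (hac : ∀ i, ν i ≪ (volume : Measure ℝ)) :
    Measure.pi ν {v | MvPolynomial.eval v p = 0} = 0 := by
  classical
  haveI := hprob
  set n := Fintype.card ι with hn
  set e' : Fin n ≃ ι := (Fintype.equivFin ι).symm with he'
  set φ := MeasurableEquiv.piCongrLeft (fun _ : ι => ℝ) e' with hφ
  have hmp : MeasurePreserving φ (Measure.pi fun i' => ν (e' i')) (Measure.pi ν) :=
    MeasureTheory.measurePreserving_piCongrLeft ν e'
  have hSmeas : MeasurableSet {v : ι → ℝ | MvPolynomial.eval v p = 0} :=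
    (measurable_eval p) (measurableSet_singleton 0)
  have hpre : φ ⁻¹' {v : ι → ℝ | MvPolynomial.eval v p = 0}
      = {u : Fin n → ℝ | MvPolynomial.eval u (rename e'.symm p) = 0} := by
    ext u
    simp only [Set.mem_preimage, Set.mem_setOf_eq]
    rw [eval_rename]
    have hfu : (φ u : ι → ℝ) = fun i => u (e'.symm i) := by
      funext i
      conv_lhs => rw [← e'.apply_symm_apply i]
      rw [hφ, MeasurableEquiv.piCongrLeft_apply_apply]
    rw [hfu]
    rfl
  have hp' : rename (⇑e'.symm) p ≠ 0 := by
    intro h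
    apply hp
    have hinj : Function.Injective
        (rename (R := ℝ) (⇑e'.symm) : MvPolynomial ι ℝ → MvPolynomial (Fin n) ℝ) :=
      rename_injective _ e'.symm.injective
    apply hinj
    rw [h, map_zero]
  rw [← hmp.measure_preimage hSmeas.nullMeasurableSet, hpre]
  exact polynull n _ hp' _ (fun j => hprob _) (fun j => hac _)

theorem ae_eval_ne {Ω : Type} [MeasurableSpace Ω] (μ : Measure Ω) [IsProbabilityMeasure μ]
    {ι : Type} [Fintype ι] (f : ι → Ω → ℝ) (hmeas : ∀ i, Measurable (f i))
    (hind : iIndepFun f μ)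
    (habs : ∀ i, μ.map (f i) ≪ (volume : Measure ℝ))
    (p : MvPolynomial ι ℝ) (hp : p ≠ 0) :
    ∀ᵐ ω ∂μ, MvPolynomial.eval (fun i => f i ω) p ≠ 0 := by
  haveI : ∀ i, IsProbabilityMeasure (μ.map (f i)) :=
    fun i => Measure.isProbabilityMeasure_map (hmeas i).aemeasurable
  have hjoint := joint_eq_pi μ f hmeas hind
  have hnull := polynull' p hp (fun i => μ.map (f i)) (fun i => inferInstance) habs
  rw [ae_iff]
  have hg : Measurable (fun ω i => f i ω) := measurable_pi_lambda _ hmeas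
  have hSmeas : MeasurableSet {v : ι → ℝ | MvPolynomial.eval v p = 0} :=
    (measurable_eval p) (measurableSet_singleton 0)
  have hset : {ω | ¬ MvPolynomial.eval (fun i => f i ω) p ≠ 0}
      = (fun ω i => f i ω) ⁻¹' {v | MvPolynomial.eval v p = 0} := by
    ext ω; simp
  rw [hset, ← Measure.map_apply hg hSmeas, hjoint]
  exact hnull

end Meas2

end LoraAux



namespace LoraAux

section Poly

open MvPolynomial

variable {D : ℕ} {σ : Type*}

lemma map_pprod (φ : MvPolynomial σ ℝ →+* ℝ)
    (Wp : ℕ → Matrix (Fin D) (Fin D) (MvPolynomial σ ℝ)) (a n : ℕ) :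
    (pprod Wp a n).map φ = pprod (fun l => (Wp l).map φ) a n := by
  have h := pprod_hom
    ((RingHom.mapMatrix φ : Matrix (Fin D) (Fin D) (MvPolynomial σ ℝ) →+*
      Matrix (Fin D) (Fin D) ℝ)).toMonoidHom Wp a n
  simpa using h

lemma map_pprod_det (φ : MvPolynomial σ ℝ →+* ℝ)
    (Wp : ℕ → Matrix (Fin D) (Fin D) (MvPolynomial σ ℝ)) (a n : ℕ) :
    φ ((pprod Wp a n).det) = (pprod (fun l => (Wp l).map φ) a n).det := by
  rw [RingHom.map_det]
  rw [show φ.mapMatrix (pprod Wp a n) = (pprod Wp a n).map φ from rfl, map_pprod]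

end Poly

end LoraAux



namespace LoraAux

open MvPolynomial

lemma map_mix_det {D : ℕ} {σ : Type*} (φ : MvPolynomial σ ℝ →+* ℝ)
    (R k : ℕ) (Xm Ym : Matrix (Fin D) (Fin D) (MvPolynomial σ ℝ)) :
    φ ((mix R k Xm Ym).det) = (mix R k (Xm.map φ) (Ym.map φ)).det := by
  rw [RingHom.map_det]
  rw [show φ.mapMatrix (mix R k Xm Ym) = (mix R k Xm Ym).map φ from rfl, mix_map]

theorem main {D L Lbar M : ℕ}
    (hD : 1 ≤ D) (hLbar : 1 ≤ Lbar) (hLL : Lbar ≤ L) (hM : M = L / Lbar)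
    {Ω : Type} [MeasurableSpace Ω] (μ : Measure Ω) [IsProbabilityMeasure μ]
    (Wbar W : ℕ → Ω → Matrix (Fin D) (Fin D) ℝ)
    (bbar : ℕ → Fin D → ℝ)
    (hmeas : ∀ idx, Measurable (entFam (Lbar := Lbar) (L := L) Wbar W idx))
    (hindep : iIndepFun
      (entFam (Lbar := Lbar) (L := L) Wbar W) μ)
    (habs : ∀ idx,
      μ.map (entFam (Lbar := Lbar) (L := L) Wbar W idx) ≪ (volume : Measure ℝ))
    (R : ℕ) (hR1 : 1 ≤ R) (hRD : R ≤ D)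
    (hR : (D : ℝ) / (M : ℝ) ≤ (R : ℝ))
    (X : Set (Fin D → ℝ)) (hX : Bornology.IsBounded X) :
    ∀ᵐ ω ∂μ,
      ∃ (ΔW : ℕ → Matrix (Fin D) (Fin D) ℝ) (bhat : ℕ → Fin D → ℝ),
        (∀ l ∈ Finset.Icc 1 L, (ΔW l).rank ≤ R) ∧
        ∀ x ∈ X,
          fnn (fun l => W l ω + ΔW l) bhat L x =
            fnn (fun i => Wbar i ω) bbar Lbar x := by
  classical
  have hMpos : 1 ≤ M := by
    rw [hM]; exact (Nat.one_le_div_iff (by omega)).mpr hLL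
  have hMR : D ≤ M * R := by
    have hMpos' : (0:ℝ) < (M:ℝ) := by exact_mod_cast hMpos
    have h1 : (D:ℝ) ≤ (R:ℝ) * (M:ℝ) := (div_le_iff₀ hMpos').mp hR
    have h2 : (D:ℝ) ≤ (M:ℝ) * (R:ℝ) := by linarith [h1]
    exact_mod_cast h2
  have hLbarM : Lbar * M ≤ L := by
    rw [hM, Nat.mul_comm]
    exact Nat.div_mul_le_self L Lbar
  set t : ℕ → ℕ := fun i => if i < Lbar then i * M else L with ht
  have ht0 : t 0 = 0 := by simp [ht, show 0 < Lbar by omega]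
  have htL : t Lbar = L := by simp [ht]
  have htval : ∀ i, i < Lbar → t i = i * M := fun i hi => by simp [ht, hi]
  have hmono : ∀ i, i < Lbar → t i < t (i+1) := by
    intro i hi
    rw [htval i hi]
    by_cases h2 : i + 1 < Lbar
    · rw [htval _ h2]
      have h3 : (i+1) * M = i * M + M := by ring
      omega
    · have h4 : t (i+1) = L := by simp [ht, h2]
      rw [h4]
      have h5 : (i+1) * M ≤ Lbar * M := Nat.mul_le_mul_right M (by omega)
      have h3 : (i+1) * M = i * M + M := by ring
      omega
  have hsize : ∀ i, i < Lbar → M ≤ t (i+1) - t i := by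
    intro i hi
    rw [htval i hi]
    by_cases h2 : i + 1 < Lbar
    · rw [htval _ h2]
      have h3 : (i+1) * M = i * M + M := by ring
      omega
    · have h4 : t (i+1) = L := by simp [ht, h2]
      rw [h4]
      have h5 : Lbar * M = i * M + M := by
        have h6 : Lbar = i + 1 := by omega
        rw [h6]; ring
      omega
  have htle : ∀ i, t i ≤ L := by
    intro i
    by_cases h2 : i < Lbar
    · rw [htval i h2]
      have h5 : i * M ≤ Lbar * M := Nat.mul_le_mul_right M (by omega)
      omega
    · simp [ht, h2]
  set ent := entFam (Lbar := Lbar) (L := L) Wbar W with hent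
  set Wp : ℕ → Matrix (Fin D) (Fin D)
      (MvPolynomial (({i // i ∈ Finset.Icc 1 Lbar} ⊕
        {l // l ∈ Finset.Icc 1 L}) × Fin D × Fin D) ℝ) :=
    fun l => Matrix.of fun i j =>
      if h : l ∈ Finset.Icc 1 L then MvPolynomial.X (Sum.inr ⟨l, h⟩, i, j) else 0 with hWp
  set Wbp : ℕ → Matrix (Fin D) (Fin D)
      (MvPolynomial (({i // i ∈ Finset.Icc 1 Lbar} ⊕
        {l // l ∈ Finset.Icc 1 L}) × Fin D × Fin D) ℝ) :=
    fun i0 => Matrix.of fun i j =>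
      if h : i0 ∈ Finset.Icc 1 Lbar then MvPolynomial.X (Sum.inl ⟨i0, h⟩, i, j) else 0 with hWbp
  have hevalW : ∀ ω l, l ∈ Finset.Icc 1 L →
      (Wp l).map ⇑(MvPolynomial.eval (fun idx => ent idx ω)) = W l ω := by
    intro ω l hl
    ext i j
    obtain ⟨hl1, hl2⟩ := Finset.mem_Icc.mp hl
    simp [hWp, hl1, hl2, hent, entFam, Matrix.map_apply]
  have hevalWb : ∀ ω i0, i0 ∈ Finset.Icc 1 Lbar →
      (Wbp i0).map ⇑(MvPolynomial.eval (fun idx => ent idx ω)) = Wbar i0 ω := by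
    intro ω i0 hi0
    ext i j
    obtain ⟨h1, h2⟩ := Finset.mem_Icc.mp hi0
    simp [hWbp, h1, h2, hent, entFam, Matrix.map_apply]
  set v0 : (({i // i ∈ Finset.Icc 1 Lbar} ⊕
      {l // l ∈ Finset.Icc 1 L}) × Fin D × Fin D) → ℝ :=
    fun idx => if idx.2.1 = idx.2.2 then (1:ℝ) else 0 with hv0
  have h0W : ∀ l, l ∈ Finset.Icc 1 L →
      (Wp l).map ⇑(MvPolynomial.eval v0) = (1 : Mx D) := by
    intro l hl
    ext i j
    obtain ⟨hl1, hl2⟩ := Finset.mem_Icc.mp hl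
    by_cases hij : i = j <;>
      simp [hWp, hl1, hl2, hv0, Matrix.one_apply, hij, Matrix.map_apply]
  have h0Wb : ∀ i0, i0 ∈ Finset.Icc 1 Lbar →
      (Wbp i0).map ⇑(MvPolynomial.eval v0) = (1 : Mx D) := by
    intro i0 hi0
    ext i j
    obtain ⟨h1, h2⟩ := Finset.mem_Icc.mp hi0
    by_cases hij : i = j <;>
      simp [hWbp, h1, h2, hv0, Matrix.one_apply, hij, Matrix.map_apply]
  have hrange : ∀ i, i < Lbar → ∀ l, t i < l → l ≤ t i + (t (i+1) - t i) →
      l ∈ Finset.Icc 1 L := by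
    intro i hi l h1 h2
    have h3 := hmono i hi
    have h4 := htle (i+1)
    simp only [Finset.mem_Icc]
    omega
  have hmemIcc : ∀ i, i < Lbar → i + 1 ∈ Finset.Icc 1 Lbar := by
    intro i hi; simp only [Finset.mem_Icc]; omega
  set pA : ℕ → MvPolynomial _ ℝ :=
    fun i => (pprod Wp (t i) (t (i+1) - t i)).det with hpA
  set pN : ℕ → ℕ → MvPolynomial _ ℝ := fun i k =>
    (mix R k (pprod Wp (t i) (t (i+1) - t i)) (Wbp (i+1))).det with hpN
  have hpA_eval : ∀ (ω : Ω) i, i < Lbar →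
      MvPolynomial.eval (fun idx => ent idx ω) (pA i)
        = (pprod (fun l => W l ω) (t i) (t (i+1) - t i)).det := by
    intro ω i hi
    simp only [hpA]
    rw [map_pprod_det]
    congr 1
    exact pprod_congr (fun l h1 h2 => hevalW ω l (hrange i hi l h1 h2))
  have hpN_eval : ∀ (ω : Ω) i k, i < Lbar →
      MvPolynomial.eval (fun idx => ent idx ω) (pN i k)
        = (mix R k (pprod (fun l => W l ω) (t i) (t (i+1) - t i))
            (Wbar (i+1) ω)).det := by
    intro ω i k hi
    simp only [hpN]
    rw [map_mix_det, map_pprod]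
    rw [pprod_congr (fun l h1 h2 => hevalW ω l (hrange i hi l h1 h2)),
      hevalWb ω (i+1) (hmemIcc i hi)]
  have hpA_ne : ∀ i, i < Lbar → pA i ≠ 0 := by
    intro i hi h0
    have h1 := congrArg ⇑(MvPolynomial.eval v0) h0
    rw [map_zero] at h1
    simp only [hpA] at h1
    rw [map_pprod_det,
      pprod_congr (fun l h1' h2' => h0W l (hrange i hi l h1' h2')),
      pprod_one, Matrix.det_one] at h1
    exact one_ne_zero h1
  have hpN_ne : ∀ i k, i < Lbar → pN i k ≠ 0 := by
    intro i k hi h0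
    have h1 := congrArg ⇑(MvPolynomial.eval v0) h0
    rw [map_zero] at h1
    simp only [hpN] at h1
    rw [map_mix_det, map_pprod,
      pprod_congr (fun l h1' h2' => h0W l (hrange i hi l h1' h2')),
      pprod_one, h0Wb (i+1) (hmemIcc i hi), mix_one, Matrix.det_one] at h1
    exact one_ne_zero h1
  have hae : ∀ᵐ ω ∂μ, ∀ i ∈ Finset.range Lbar,
      (MvPolynomial.eval (fun idx => ent idx ω) (pA i) ≠ 0 ∧
        ∀ k ∈ Finset.Icc 1 M,
          MvPolynomial.eval (fun idx => ent idx ω) (pN i k) ≠ 0) := by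
    rw [Filter.eventually_all_finset]
    intro i hi
    have hi' : i < Lbar := Finset.mem_range.mp hi
    refine Filter.Eventually.and ?_ ?_
    · exact ae_eval_ne μ ent hmeas hindep habs (pA i) (hpA_ne i hi')
    · rw [Filter.eventually_all_finset]
      intro k hk
      exact ae_eval_ne μ ent hmeas hindep habs (pN i k) (hpN_ne i k hi')
  filter_upwards [hae] with ω hω
  have hdetA : ∀ i, i < Lbar →
      IsUnit (pprod (fun l => W l ω) (t i) (t (i+1) - t i)).det := by
    intro i hi
    have h1 := (hω i (Finset.mem_range.mpr hi)).1
    rw [hpA_eval ω i hi] at h1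
    exact isUnit_iff_ne_zero.mpr h1
  have hdetN : ∀ i, i < Lbar → ∀ k, 1 ≤ k → k ≤ M →
      IsUnit (mix R k (pprod (fun l => W l ω) (t i) (t (i+1) - t i))
        (Wbar (i+1) ω)).det := by
    intro i hi k h1 h2
    have h3 := (hω i (Finset.mem_range.mpr hi)).2 k (Finset.mem_Icc.mpr ⟨h1, h2⟩)
    rw [hpN_eval ω i k hi] at h3
    exact isUnit_iff_ne_zero.mpr h3
  have hex : ∀ i, ∃ Q : ℕ → Mx D, i < Lbar →
      (∀ l, (Q l - W l ω).rank ≤ R) ∧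
        pprod Q (t i) (t (i+1) - t i) = Wbar (i+1) ω := by
    intro i
    by_cases hi : i < Lbar
    · obtain ⟨Q, hQ1, hQ2⟩ := group_exists M R hMR (t i) (t (i+1) - t i) (hsize i hi)
        (fun l => W l ω) (Wbar (i+1) ω) (hdetA i hi) (fun k h1 h2 => hdetN i hi k h1 h2)
      exact ⟨Q, fun _ => ⟨hQ1, hQ2⟩⟩
    · exact ⟨fun l => W l ω, fun h => absurd h hi⟩
  choose Qf hQf using hex
  set gidx : ℕ → ℕ := fun l => min ((l - 1) / M) (Lbar - 1) with hgidxdef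
  have hgi_lt : ∀ l, gidx l < Lbar := by
    intro l
    have h1 := min_le_right ((l-1)/M) (Lbar - 1)
    have h2 : gidx l = min ((l-1)/M) (Lbar - 1) := rfl
    omega
  have hgidx : ∀ i l, i < Lbar → t i < l → l ≤ t (i+1) → gidx l = i := by
    intro i l hi h1 h2
    rw [htval i hi] at h1
    have h2' : gidx l = min ((l-1)/M) (Lbar - 1) := rfl
    by_cases h3 : i + 1 < Lbar
    · rw [htval _ h3] at h2
      have h4 : (i+1) * M = i * M + M := by ring
      have h5 : i * M ≤ l - 1 := by omega
      have h6 : l - 1 < (i+1) * M := by omega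
      have h7 : i ≤ (l-1)/M := (Nat.le_div_iff_mul_le (by omega)).mpr h5
      have h8 : (l-1)/M < i + 1 := (Nat.div_lt_iff_lt_mul (by omega)).mpr h6
      have h9 : (l-1)/M = i := by omega
      rw [h2', h9]
      have h10 : i ≤ Lbar - 1 := by omega
      exact min_eq_left h10
    · have h10 : Lbar = i + 1 := by omega
      have h5 : i * M ≤ l - 1 := by omega
      have h7 : i ≤ (l-1)/M := (Nat.le_div_iff_mul_le (by omega)).mpr h5
      rw [h2']
      have h11 : Lbar - 1 = i := by omega
      rw [h11]
      exact min_eq_right h7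
  set Qg : ℕ → Mx D := fun l => Qf (gidx l) l with hQgdef
  have hrank : ∀ l, (Qg l - W l ω).rank ≤ R := fun l => (hQf (gidx l) (hgi_lt l)).1 l
  have hprodQg : ∀ i, i < Lbar →
      pprod Qg (t i) (t (i+1) - t i) = Wbar (i+1) ω := by
    intro i hi
    have hteq : t i + (t (i+1) - t i) = t (i+1) := by
      have := hmono i hi; omega
    have hcong : pprod Qg (t i) (t (i+1) - t i)
        = pprod (Qf i) (t i) (t (i+1) - t i) := by
      refine pprod_congr (fun l h1 h2 => ?_)
      have h3 := hgidx i l hi h1 (by omega)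
      show Qf (gidx l) l = Qf i l
      rw [h3]
    rw [hcong]
    exact (hQf i hi).2
  obtain ⟨β, hβ⟩ := net_assemble Qg (fun i0 => Wbar i0 ω) bbar t ht0 X hX Lbar
    hmono hprodQg
  refine ⟨fun l => Qg l - W l ω, β, ?_, ?_⟩
  · intro l _
    exact hrank l
  · intro x hx
    have hWQ : (fun l => W l ω + (Qg l - W l ω)) = Qg := by
      funext l
      abel
    rw [hWQ, fnn_eq_runF]
    have h1 := hβ x hx
    rw [htL] at h1
    exact h1

end LoraAux


/-- **Exact representation for randomly generated models (Corollary 1).**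
If the entries of the target weights `(W̄_i)_{i=1}^{L̄}` and the frozen weights
`(W_l)_{l=1}^{L}` are mutually independent with laws absolutely continuous
w.r.t. Lebesgue measure, and `R ≥ D/M` with `M = ⌊L/L̄⌋`, then with probability
1 there are rank-`≤ R` adapters and biases making the adapted `L`-layer model
agree with the `L̄`-layer target on the bounded input region `X`. -/
theorem lora_fnn_exact_random_models (D L Lbar M : ℕ)
    (hD : 1 ≤ D) (hLbar : 1 ≤ Lbar) (hLL : Lbar ≤ L) (hM : M = L / Lbar)
    {Ω : Type} [MeasurableSpace Ω] (μ : Measure Ω) [IsProbabilityMeasure μ]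
    (Wbar W : ℕ → Ω → Matrix (Fin D) (Fin D) ℝ)
    (bbar : ℕ → Fin D → ℝ)
    (hmeas : ∀ idx, Measurable (entFam (Lbar := Lbar) (L := L) Wbar W idx))
    (hindep : iIndepFun
      (entFam (Lbar := Lbar) (L := L) Wbar W) μ)
    (habs : ∀ idx,
      μ.map (entFam (Lbar := Lbar) (L := L) Wbar W idx) ≪ (volume : Measure ℝ))
    (R : ℕ) (hR1 : 1 ≤ R) (hRD : R ≤ D)
    (hR : (D : ℝ) / (M : ℝ) ≤ (R : ℝ))
    (X : Set (Fin D → ℝ)) (hX : Bornology.IsBounded X) :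
    ∀ᵐ ω ∂μ,
      ∃ (ΔW : ℕ → Matrix (Fin D) (Fin D) ℝ) (bhat : ℕ → Fin D → ℝ),
        (∀ l ∈ Finset.Icc 1 L, (ΔW l).rank ≤ R) ∧
        ∀ x ∈ X,
          fnn (fun l => W l ω + ΔW l) bhat L x =
            fnn (fun i => Wbar i ω) bbar Lbar x := by
  exact LoraAux.main hD hLbar hLL hM μ Wbar W bbar hmeas hindep habs R hR1 hRD hR X hX

end
end

section
/- Let D ≥ 2 and L ≥ 2. Let f̄(x) = ReLU(W̄_1 x + b̄_1) be a one-layer target ReLU network with W̄_1 ∈ ℝ^{D×D} non-singular and b̄_1 ∈ ℝ^D. Let the entries of the frozen weight matrices W_1, …, W_L be mutually independent real random variables, each with a distribution absolutely continuous with respect to the Lebesgue measure on ℝ, and let b_1 ∈ ℝ^D be an arbitrary fixed first-layer bias. Then with probability 1 the following holds: for every choice of weight matrices and bias vectors of layers 2 through L (keeping the first layer x ↦ ReLU(W_1 x + b_1) frozen), the resulting L-layer ReLU FNN f satisfies f ≠ f̄, i.e., there exists x ∈ ℝ^D with f(x) ≠ f̄(x). -/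
open Matrix MeasureTheory ProbabilityTheory Finset

noncomputable section

/-- The family of all entries of the frozen matrices `W_1, …, W_L`, as real
random variables. -/
def entFamW {D L : ℕ} {Ω : Type} (W : ℕ → Ω → Matrix (Fin D) (Fin D) ℝ) :
    {l // l ∈ Finset.Icc 1 L} × Fin D × Fin D → Ω → ℝ :=
  fun q ω => W q.1.1 ω q.2.1 q.2.2

lemma measurable_det' {n : ℕ} : Measurable fun M : Fin n → Fin n → ℝ => (Matrix.of M).det := by
  simp only [Matrix.det_apply']
  exact Finset.measurable_sum _ fun σ _ =>
    (Finset.measurable_prod _ fun i _ =>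
      ((measurable_pi_apply i).comp (measurable_pi_apply (σ i)))).const_mul _

lemma slice_null {Ω α : Type*} [MeasurableSpace Ω] [MeasurableSpace α]
    (μ : Measure Ω) [IsProbabilityMeasure μ]
    (X : Ω → ℝ) (V : Ω → α) (hX : Measurable X) (hV : Measurable V)
    (hXV : IndepFun X V μ) (hac : μ.map X ≪ (volume : Measure ℝ))
    (s : Set (ℝ × α)) (hs : MeasurableSet s)
    (hslice : ∀ v, (volume : Measure ℝ) {x | (x, v) ∈ s} = 0) :
    μ {ω | (X ω, V ω) ∈ s} = 0 := by
  haveI : IsProbabilityMeasure (μ.map X) := Measure.isProbabilityMeasure_map hX.aemeasurable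
  haveI : IsProbabilityMeasure (μ.map V) := Measure.isProbabilityMeasure_map hV.aemeasurable
  have hmap : μ.map (fun ω => (X ω, V ω)) = (μ.map X).prod (μ.map V) :=
    (indepFun_iff_map_prod_eq_prod_map_map hX.aemeasurable hV.aemeasurable).mp hXV
  have hpair : Measurable fun ω => (X ω, V ω) := hX.prodMk hV
  have h1 : μ {ω | (X ω, V ω) ∈ s} = ((μ.map X).prod (μ.map V)) s := by
    rw [← hmap, Measure.map_apply hpair hs]; rfl
  rw [h1, Measure.prod_apply_symm hs]
  have h2 : ∀ v, (μ.map X) ((fun x => (x, v)) ⁻¹' s) = 0 := fun v => hac (hslice v)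
  simp only [h2, lintegral_zero]

lemma det_update_last {n : ℕ} (N : Matrix (Fin (n + 1)) (Fin (n + 1)) ℝ) (x : ℝ) :
    (N.updateRow (Fin.last n) (Function.update (N (Fin.last n)) (Fin.last n) x)).det
      = x * (N.submatrix Fin.castSucc Fin.castSucc).det
        + (N.updateRow (Fin.last n) (Function.update (N (Fin.last n)) (Fin.last n) 0)).det := by
  have hrow : Function.update (N (Fin.last n)) (Fin.last n) x
      = x • (Pi.single (Fin.last n) (1:ℝ) : Fin (n+1) → ℝ) + Function.update (N (Fin.last n)) (Fin.last n) 0 := by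
    funext j
    by_cases hj : j = Fin.last n <;>
      simp [hj, Function.update_apply, Pi.single_apply]
  rw [hrow, Matrix.det_updateRow_add, Matrix.det_updateRow_smul]
  congr 2
  -- det of matrix with last row = e_last equals the principal minor
  set B := N.updateRow (Fin.last n) (Pi.single (Fin.last n) (1:ℝ) : Fin (n+1) → ℝ) with hB
  rw [Matrix.det_succ_row B (Fin.last n)]
  have hBrow : ∀ j, B (Fin.last n) j = if j = Fin.last n then 1 else 0 := by
    intro j; simp [hB, Matrix.updateRow_apply, Pi.single_apply]
  rw [Finset.sum_eq_single (Fin.last n)]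
  · have hsub : B.submatrix (Fin.last n).succAbove (Fin.last n).succAbove
        = N.submatrix Fin.castSucc Fin.castSucc := by
      ext a b
      simp [hB, Fin.succAbove_last, Matrix.updateRow_apply, (Fin.castSucc_lt_last a).ne]
    rw [hsub, hBrow]
    simp only [if_pos rfl, Fin.val_last, one_mul, mul_one]
    rw [Even.neg_one_pow ⟨n, rfl⟩, one_mul]
    simp
  · intro j _ hj
    rw [hBrow]; simp [hj]
  · intro h; simp at h

lemma minor_null {D L : ℕ} {Ω : Type} [MeasurableSpace Ω] (μ : Measure Ω)
    [IsProbabilityMeasure μ] (W : ℕ → Ω → Matrix (Fin D) (Fin D) ℝ) (hL : 1 ≤ L)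
    (hmeas : ∀ idx, Measurable (entFamW (L := L) W idx))
    (hindep : iIndepFun (entFamW (L := L) W) μ)
    (habs : ∀ idx, μ.map (entFamW (L := L) W idx) ≪ (volume : Measure ℝ)) :
    ∀ k (hk : k ≤ D),
      μ {ω | ((W 1 ω).submatrix (Fin.castLE hk) (Fin.castLE hk)).det = 0} = 0 := by
  have h1L : (1 : ℕ) ∈ Finset.Icc 1 L := by simp [Finset.mem_Icc, hL]
  intro k
  induction k with
  | zero =>
    intro hk
    have : {ω | ((W 1 ω).submatrix (Fin.castLE hk) (Fin.castLE hk)).det = 0} = ∅ := by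
      ext ω; simp [Matrix.det_fin_zero]
    rw [this]; exact measure_empty
  | succ k ih =>
    intro hk'
    have hkk : k ≤ D := Nat.le_of_succ_le hk'
    set kD : Fin D := ⟨k, hk'⟩ with hkDdef
    set q0 : {l // l ∈ Finset.Icc 1 L} × Fin D × Fin D := (⟨1, h1L⟩, kD, kD) with hq0def
    set X : Ω → ℝ := entFamW (L := L) W q0 with hXdef
    set T : Finset ({l // l ∈ Finset.Icc 1 L} × Fin D × Fin D) := {q0}ᶜ with hTdef
    -- the "all other entries" random vector, reorganized as a matrix-shaped vector
    have hmemT : ∀ p : Fin D × Fin D, p ≠ (kD, kD) →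
        ((⟨1, h1L⟩, p) : {l // l ∈ Finset.Icc 1 L} × Fin D × Fin D) ∈ T := by
      intro p hp
      simp only [hTdef, Finset.mem_compl, Finset.mem_singleton]
      intro hq
      exact hp (congrArg Prod.snd hq)
    classical
    set h : ({q // q ∈ T} → ℝ) → (Fin D × Fin D → ℝ) := fun g p =>
      if hp : p ≠ (kD, kD) then g ⟨(⟨1, h1L⟩, p), hmemT p hp⟩ else 0 with hhdef
    set gT : Ω → {q // q ∈ T} → ℝ := fun ω i => entFamW (L := L) W i.1 ω with hgTdef
    set V : Ω → (Fin D × Fin D → ℝ) := fun ω => h (gT ω) with hVdef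
    have hVval : ∀ ω p, V ω p = if p = (kD, kD) then 0 else W 1 ω p.1 p.2 := by
      intro ω p
      by_cases hp : p = (kD, kD)
      · simp [hVdef, hhdef, hp]
      · simp [hVdef, hhdef, hp, hgTdef, entFamW]
    have hXmeas : Measurable X := hmeas q0
    have hhmeas : Measurable h := by
      apply measurable_pi_lambda
      intro p
      by_cases hp : p ≠ (kD, kD)
      · simp only [hhdef, dif_pos hp]; exact measurable_pi_apply _
      · simp only [hhdef, dif_neg hp]; exact measurable_const
    have hgTmeas : Measurable gT :=
      measurable_pi_lambda _ fun i => hmeas i.1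
    have hVmeas : Measurable V := hhmeas.comp hgTmeas
    have hXV : IndepFun X V μ := by
      have hdisj : Disjoint ({q0} : Finset _) T := by
        simp [hTdef, disjoint_compl_right]
      have hbase := hindep.indepFun_finset {q0} T hdisj hmeas
      have := hbase.comp (φ := fun g : ({q // q ∈ ({q0} : Finset _)} → ℝ) =>
        g ⟨q0, Finset.mem_singleton_self q0⟩) (ψ := h) (measurable_pi_apply _ : Measurable fun g : ({q // q ∈ ({q0} : Finset _)} → ℝ) => g ⟨q0, Finset.mem_singleton_self q0⟩) hhmeas
      exact this
    -- matrix assembly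
    set asm : ℝ → (Fin D × Fin D → ℝ) → Matrix (Fin D) (Fin D) ℝ := fun x v =>
      Matrix.of fun a b => if (a, b) = (kD, kD) then x else v (a, b) with hasmdef
    have hasmW : ∀ ω, asm (X ω) (V ω) = W 1 ω := by
      intro ω; ext a b
      by_cases hab : (a, b) = (kD, kD)
      · simp only [hasmdef, Matrix.of_apply, if_pos hab, hXdef, entFamW, hq0def]
        rw [show a = kD from congrArg Prod.fst hab, show b = kD from congrArg Prod.snd hab]
      · simp only [hasmdef, Matrix.of_apply, if_neg hab, hVval, hab, if_false]
    set s : Set (ℝ × (Fin D × Fin D → ℝ)) :=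
      {p | ((asm p.1 p.2).submatrix (Fin.castLE hk') (Fin.castLE hk')).det = 0 ∧
           ((asm p.1 p.2).submatrix (Fin.castLE hkk) (Fin.castLE hkk)).det ≠ 0} with hsdef
    have hasm_meas : Measurable fun p : ℝ × (Fin D × Fin D → ℝ) =>
        (fun a b => if (a, b) = (kD, kD) then p.1 else p.2 (a, b) : Fin D → Fin D → ℝ) := by
      apply measurable_pi_lambda; intro a; apply measurable_pi_lambda; intro b
      by_cases hab : (a, b) = (kD, kD)
      · simp only [if_pos hab]; exact measurable_fst
      · simp only [if_neg hab]; exact (measurable_pi_apply _).comp measurable_snd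
    have hsub_meas : ∀ m (hm : m ≤ D), Measurable fun p : ℝ × (Fin D × Fin D → ℝ) =>
        ((asm p.1 p.2).submatrix (Fin.castLE hm) (Fin.castLE hm)).det := by
      intro m hm
      have : Measurable fun p : ℝ × (Fin D × Fin D → ℝ) =>
          (fun a b => asm p.1 p.2 (Fin.castLE hm a) (Fin.castLE hm b) : Fin m → Fin m → ℝ) := by
        apply measurable_pi_lambda; intro a; apply measurable_pi_lambda; intro b
        exact ((measurable_pi_apply _).comp (measurable_pi_apply _)).comp hasm_meas
      exact measurable_det'.comp this
    have hs : MeasurableSet s := by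
      have h1 := (hsub_meas (k+1) hk') (MeasurableSet.singleton (0:ℝ))
      have h2 := (hsub_meas k hkk) (MeasurableSet.singleton (0:ℝ))
      exact h1.inter h2.compl
    have hslice : ∀ v, (volume : Measure ℝ) {x | (x, v) ∈ s} = 0 := by
      intro v
      -- the (k+1)-minor is affine in x with slope the k-minor
      set N : Matrix (Fin (k+1)) (Fin (k+1)) ℝ :=
        (asm 0 v).submatrix (Fin.castLE hk') (Fin.castLE hk') with hNdef
      have hlastcast : Fin.castLE hk' (Fin.last k) = kD := by
        apply Fin.ext; simp [Fin.last, hkDdef]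
      have hmat : ∀ x, (asm x v).submatrix (Fin.castLE hk') (Fin.castLE hk')
          = N.updateRow (Fin.last k) (Function.update (N (Fin.last k)) (Fin.last k) x) := by
        intro x
        ext a b
        by_cases ha : a = Fin.last k
        · subst ha
          rw [Matrix.updateRow_self]
          by_cases hb : b = Fin.last k
          · subst hb
            simp [Function.update_apply, hasmdef, hlastcast]
          · rw [Function.update_of_ne hb]
            have hcb : Fin.castLE hk' b ≠ kD := by
              intro hc
              exact hb (Fin.ext (by simpa [Fin.last] using congrArg Fin.val hc))
            simp [hNdef, hasmdef, hlastcast, hcb, Prod.ext_iff]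
        · rw [Matrix.updateRow_ne ha]
          have hca : Fin.castLE hk' a ≠ kD := by
            intro hc
            exact ha (Fin.ext (by simpa [Fin.last] using congrArg Fin.val hc))
          simp [hNdef, hasmdef, hca, Prod.ext_iff]
      have hminor : N.submatrix Fin.castSucc Fin.castSucc
          = (asm 0 v).submatrix (Fin.castLE hkk) (Fin.castLE hkk) := by
        ext a b
        simp only [hNdef, Matrix.submatrix_apply]
        congr 1 <;> exact Fin.ext rfl
      have hksame : ∀ x, ((asm x v).submatrix (Fin.castLE hkk) (Fin.castLE hkk))
          = (asm 0 v).submatrix (Fin.castLE hkk) (Fin.castLE hkk) := by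
        intro x
        ext a b
        have hca : Fin.castLE hkk a ≠ kD := by
          intro hc
          have := congrArg Fin.val hc
          simp [hkDdef] at this
          omega
        simp [hasmdef, hca, Prod.ext_iff]
      set d : ℝ := ((asm 0 v).submatrix (Fin.castLE hkk) (Fin.castLE hkk)).det with hddef
      set C : ℝ := (N.updateRow (Fin.last k)
        (Function.update (N (Fin.last k)) (Fin.last k) 0)).det with hCdef
      have haffine : ∀ x, ((asm x v).submatrix (Fin.castLE hk') (Fin.castLE hk')).det
          = x * d + C := by
        intro x
        rw [hmat x, det_update_last, hminor]
      by_cases hd : d = 0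
      · have : {x | (x, v) ∈ s} = ∅ := by
          ext x
          simp only [hsdef, Set.mem_setOf_eq, Set.mem_empty_iff_false, iff_false]
          intro hcon
          exact hcon.2 (by rw [hksame x, ← hddef, hd])
        rw [this]; exact measure_empty
      · refine measure_mono_null ?_ (measure_singleton (-C / d))
        intro x hx
        have h0 := hx.1
        rw [haffine x] at h0
        have : x = -C / d := by field_simp; linarith
        simp [this]
    have hnull := slice_null μ X V hXmeas hVmeas hXV (habs q0) s hs hslice
    refine measure_mono_null ?_ (measure_union_null (ih hkk) hnull)
    intro ω hω
    by_cases hk0 : ((W 1 ω).submatrix (Fin.castLE hkk) (Fin.castLE hkk)).det = 0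
    · exact Or.inl hk0
    · refine Or.inr ?_
      simp only [hsdef, Set.mem_setOf_eq, hasmW ω]
      exact ⟨hω, hk0⟩

lemma fnn_shift {D : ℕ} (W : ℕ → Matrix (Fin D) (Fin D) ℝ) (b : ℕ → Fin D → ℝ) :
    ∀ (n : ℕ) (x : Fin D → ℝ),
      fnn W b (n + 1) x
        = fnn (fun l => W (l + 1)) (fun l => b (l + 1)) n (fnn W b 1 x) := by
  intro n
  induction n with
  | zero => intro x; rfl
  | succ n ihn =>
    intro x
    show reluVec ((W (n+2)).mulVec (fnn W b (n+1) x) + b (n+2)) = _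
    rw [ihn x]
    rfl

lemma eps_pick (β S : ℝ) (hβ : 0 < β) : ∃ ε : ℝ, 0 < ε ∧ ε * S < β := by
  refine ⟨β / (2 * (|S| + 1)), by positivity, ?_⟩
  have h1 : β / (2 * (|S| + 1)) * S ≤ β / (2 * (|S| + 1)) * |S| :=
    mul_le_mul_of_nonneg_left (le_abs_self S) (by positivity)
  have h2 : β / (2 * (|S| + 1)) * |S| < β := by
    rw [div_mul_eq_mul_div, div_lt_iff₀ (by positivity)]
    nlinarith [abs_nonneg S]
  linarith

lemma mulVec_if_apply {D : ℕ} (M : Matrix (Fin D) (Fin D) ℝ) (k j : Fin D) (α ε : ℝ) :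
    (M.mulVec (fun m => if m = j then α else ε)) k
      = M k j * α + ε * ∑ m ∈ Finset.univ.erase j, M k m := by
  simp only [Matrix.mulVec, dotProduct]
  rw [← Finset.add_sum_erase _ _ (Finset.mem_univ j)]
  simp only [if_pos rfl]
  congr 1
  rw [Finset.mul_sum]
  apply Finset.sum_congr rfl
  intro m hm
  rw [if_neg (Finset.ne_of_mem_erase hm)]
  ring

/-- Deterministic core. -/
lemma det_core {D L : ℕ} (hD : 2 ≤ D) (hL : 2 ≤ L)
    (Wbar1 : Matrix (Fin D) (Fin D) ℝ) (hWbar1 : Wbar1.det ≠ 0)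
    (bbar1 : Fin D → ℝ) (A : Matrix (Fin D) (Fin D) ℝ) (hA : A.det ≠ 0)
    (b1 : Fin D → ℝ)
    (hpar : ∀ i k : Fin D, ∃ d : Fin D → ℝ, (A.mulVec d) i = 0 ∧ (Wbar1.mulVec d) k ≠ 0)
    (V : ℕ → Matrix (Fin D) (Fin D) ℝ) (cb : ℕ → Fin D → ℝ)
    (hV1 : V 1 = A) (hcb1 : cb 1 = b1) :
    ∃ x : Fin D → ℝ, fnn V cb L x ≠ reluVec (Wbar1.mulVec x + bbar1) := by
  by_contra hcon
  push_neg at hcon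
  obtain ⟨m, rfl⟩ : ∃ m, L = m + 1 := ⟨L - 1, by omega⟩
  have hAunit : IsUnit A.det := isUnit_iff_ne_zero.mpr hA
  have hAA : A * A⁻¹ = 1 := Matrix.mul_nonsing_inv A hAunit
  have hA'A : A⁻¹ * A = 1 := Matrix.nonsing_inv_mul A hAunit
  set M := Wbar1 * A⁻¹ with hM
  have hMdet : M.det ≠ 0 := by
    rw [hM, Matrix.det_mul, Matrix.det_nonsing_inv]
    simp only [Ring.inverse_eq_inv']
    exact mul_ne_zero hWbar1 (inv_ne_zero hA)
  have hMunit : IsUnit M.det := isUnit_iff_ne_zero.mpr hMdet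
  set c : Fin D → ℝ := bbar1 - M.mulVec b1 with hc
  set xof : (Fin D → ℝ) → (Fin D → ℝ) := fun y => A⁻¹.mulVec (y - b1) with hxof
  have hkey : ∀ y, A.mulVec (xof y) + b1 = y := by
    intro y
    simp only [hxof, Matrix.mulVec_mulVec, hAA, Matrix.one_mulVec]
    abel
  have hkeybar : ∀ y, Wbar1.mulVec (xof y) + bbar1 = M.mulVec y + c := by
    intro y
    simp only [hxof, Matrix.mulVec_mulVec, ← hM, Matrix.mulVec_sub, hc]
    abel
  have hφ : ∀ x, fnn V cb 1 x = reluVec (A.mulVec x + b1) := by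
    intro x
    show reluVec ((V 1).mulVec x + cb 1) = _
    rw [hV1, hcb1]
  have hsame : ∀ y y', reluVec y = reluVec y' →
      reluVec (M.mulVec y + c) = reluVec (M.mulVec y' + c) := by
    intro y y' hyy'
    have h1 : fnn V cb 1 (xof y) = fnn V cb 1 (xof y') := by
      rw [hφ, hφ, hkey, hkey, hyy']
    have h2 : fnn V cb (m + 1) (xof y) = fnn V cb (m + 1) (xof y') := by
      rw [fnn_shift V cb m (xof y), fnn_shift V cb m (xof y'), h1]
    have h3 := hcon (xof y)
    have h4 := hcon (xof y')
    rw [hkeybar] at h3 h4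
    rw [← h3, ← h4, h2]
  -- now find y, y' contradicting hsame
  have hpar' : ∀ i k : Fin D, ∃ e : Fin D → ℝ, e i = 0 ∧ 0 < (M.mulVec e) k := by
    intro i k
    obtain ⟨d, hd1, hd2⟩ := hpar i k
    have hMAd : M.mulVec (A.mulVec d) = Wbar1.mulVec d := by
      rw [Matrix.mulVec_mulVec, hM, Matrix.mul_assoc, hA'A, Matrix.mul_one]
    rcases lt_or_gt_of_ne hd2 with hneg | hpos
    · refine ⟨-(A.mulVec d), by simp [hd1], ?_⟩
      rw [Matrix.mulVec_neg, hMAd]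
      simp only [Pi.neg_apply]
      linarith
    · exact ⟨A.mulVec d, hd1, by rw [hMAd]; exact hpos⟩
  obtain ⟨y1, y2, hrel, k, hlt⟩ : ∃ y1 y2 : Fin D → ℝ, reluVec y1 = reluVec y2 ∧
      ∃ k, (reluVec (M.mulVec y1 + c)) k < (reluVec (M.mulVec y2 + c)) k := by
    by_cases hsg : ∃ k j, M k j < 0
    · -- Case A : some negative entry, use the all-negative orthant
      obtain ⟨k, j, hkj⟩ := hsg
      set S := ∑ mm ∈ Finset.univ.erase j, M k mm with hS
      obtain ⟨ε, hε, hεS⟩ := eps_pick (-(M k j)) S (by linarith)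
      set y : Fin D → ℝ := fun mm => if mm = j then (-1 : ℝ) else -ε with hy
      have hyneg : ∀ mm, y mm < 0 := by
        intro mm
        by_cases hmm : mm = j
        · simp [hy, hmm]
        · simp [hy, hmm]; linarith
      have hγ : 0 < (M.mulVec y) k := by
        rw [hy, mulVec_if_apply]
        rw [← hS]
        nlinarith
      set γ := (M.mulVec y) k with hγdef
      set t1 := (|c k| + 1) / γ with ht1def
      have ht1 : 0 < t1 := div_pos (by positivity) hγ
      have hrelu : ∀ t : ℝ, 0 < t → reluVec (t • y) = fun _ => (0 : ℝ) := by
        intro t ht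
        funext mm
        simp only [reluVec, Pi.smul_apply, smul_eq_mul]
        exact max_eq_right (le_of_lt (mul_neg_of_pos_of_neg ht (hyneg mm)))
      refine ⟨t1 • y, (2 * t1) • y, by rw [hrelu t1 ht1, hrelu (2 * t1) (by linarith)], k, ?_⟩
      have hMt : ∀ t : ℝ, (M.mulVec (t • y) + c) k = t * γ + c k := by
        intro t
        rw [Matrix.mulVec_smul]
        simp [hγdef]
      simp only [reluVec, hMt]
      have ht1γ : t1 * γ = |c k| + 1 := div_mul_cancel₀ _ (ne_of_gt hγ)
      have habs := neg_abs_le (c k)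
      have h1 : 1 ≤ t1 * γ + c k := by rw [ht1γ]; linarith
      have habs0 := abs_nonneg (c k)
      have h2 : 2 * t1 * γ + c k = t1 * γ + c k + (|c k| + 1) := by
        linear_combination ht1γ
      rw [max_eq_left (by linarith), max_eq_left (by linarith)]
      linarith
    · -- Case B : all entries nonnegative
      push_neg at hsg
      set i : Fin D := ⟨0, by omega⟩ with hi
      have hcol : ∃ k, 0 < M k i := by
        by_contra hno
        push_neg at hno
        have hzero : ∀ k, M k i = 0 := fun k => le_antisymm (hno k) (hsg k i)
        have h0 : M.mulVec (Pi.single i 1) = 0 := by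
          funext k
          rw [Matrix.mulVec_single]
          simp [hzero k]
        have hsingle : (Pi.single i 1 : Fin D → ℝ) = 0 := by
          have h1 : M⁻¹.mulVec (M.mulVec (Pi.single i 1 : Fin D → ℝ)) = 0 := by
            rw [h0, Matrix.mulVec_zero]
          rwa [Matrix.mulVec_mulVec, Matrix.nonsing_inv_mul M hMunit,
            Matrix.one_mulVec] at h1
        have := congrFun hsingle i
        simp [Pi.single_eq_same] at this
      obtain ⟨k, hki⟩ := hcol
      obtain ⟨e, hei, hw⟩ := hpar' i k
      set S := ∑ mm ∈ Finset.univ.erase i, M k mm with hS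
      obtain ⟨ε, hε, hεS⟩ := eps_pick (M k i) S hki
      set y : Fin D → ℝ := fun mm => if mm = i then (1 : ℝ) else -ε with hy
      have hγ : 0 < (M.mulVec y) k := by
        rw [hy, mulVec_if_apply, ← hS]
        nlinarith
      set γ := (M.mulVec y) k with hγdef
      set t := (|c k| + 1) / γ with htdef
      have ht : 0 < t := div_pos (by positivity) hγ
      have hne_erase : (Finset.univ.erase i).Nonempty := by
        refine ⟨⟨1, by omega⟩, Finset.mem_erase.mpr ⟨?_, Finset.mem_univ _⟩⟩
        simp [hi, Fin.ext_iff]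
      set δ := (Finset.univ.erase i).inf' hne_erase (fun mm => (t * ε) / (|e mm| + 1)) with hδ
      have hδpos : 0 < δ := by
        rw [hδ, Finset.lt_inf'_iff]
        intro b _
        positivity
      have hδm : ∀ mm, mm ≠ i → t * (-ε) + δ * e mm ≤ 0 := by
        intro mm hmm
        have h1 : δ ≤ (t * ε) / (|e mm| + 1) :=
          Finset.inf'_le _ (Finset.mem_erase.mpr ⟨hmm, Finset.mem_univ _⟩)
        have h3 : δ * (|e mm| + 1) ≤ t * ε := by
          rw [← le_div_iff₀ (by positivity)]
          exact h1
        have h2 : δ * e mm ≤ δ * |e mm| :=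
          mul_le_mul_of_nonneg_left (le_abs_self _) (le_of_lt hδpos)
        nlinarith [abs_nonneg (e mm)]
      refine ⟨t • y, t • y + δ • e, ?_, k, ?_⟩
      · funext mm
        by_cases hmm : mm = i
        · subst hmm
          simp [reluVec, hei]
        · have hy1 : (t • y) mm = t * (-ε) := by simp [hy, hmm]
          have hy2 : (t • y + δ • e) mm = t * (-ε) + δ * e mm := by simp [hy, hmm]
          simp only [reluVec, hy1, hy2]
          rw [max_eq_right (by nlinarith), max_eq_right (hδm mm hmm)]
      · have hMy1 : (M.mulVec (t • y) + c) k = t * γ + c k := by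
          rw [Matrix.mulVec_smul]
          simp [hγdef]
        have hMy2 : (M.mulVec (t • y + δ • e) + c) k = t * γ + c k + δ * (M.mulVec e) k := by
          rw [Matrix.mulVec_add, Matrix.mulVec_smul, Matrix.mulVec_smul]
          simp [hγdef]
          ring
        have htγ : t * γ = |c k| + 1 := div_mul_cancel₀ _ (ne_of_gt hγ)
        have habs := neg_abs_le (c k)
        have hv : 1 ≤ t * γ + c k := by rw [htγ]; linarith
        simp only [reluVec, hMy1, hMy2]
        have hprod := mul_pos hδpos hw
        rw [max_eq_left (by linarith), max_eq_left (by linarith)]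
        linarith
  exact absurd (congrFun (hsame y1 y2 hrel) k) (ne_of_lt hlt)

/-- **Final-layers tuning cannot match even a one-layer target (Lemma 6).**
Let `D ≥ 2`, `L ≥ 2`, let the target be `x ↦ ReLU(W̄_1 x + b̄_1)` with `W̄_1`
non-singular, and let the entries of the frozen weights `W_1, …, W_L` be
mutually independent with laws absolutely continuous w.r.t. Lebesgue measure.
Then almost surely, for every tuning of layers `2, …, L` (the first layer
`x ↦ ReLU(W_1 x + b_1)` stays frozen), the resulting network differs from the
target at some input. -/
theorem final_layers_tuning_fails (D L : ℕ) (hD : 2 ≤ D) (hL : 2 ≤ L)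
    (Wbar1 : Matrix (Fin D) (Fin D) ℝ) (hWbar1 : Wbar1.det ≠ 0)
    (bbar1 : Fin D → ℝ)
    {Ω : Type} [MeasurableSpace Ω] (μ : Measure Ω) [IsProbabilityMeasure μ]
    (W : ℕ → Ω → Matrix (Fin D) (Fin D) ℝ)
    (b1 : Fin D → ℝ)
    (hmeas : ∀ idx, Measurable (entFamW (L := L) W idx))
    (hindep : iIndepFun (entFamW (L := L) W) μ)
    (habs : ∀ idx, μ.map (entFamW (L := L) W idx) ≪ (volume : Measure ℝ)) :
    ∀ᵐ ω ∂μ,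
      ∀ (V : ℕ → Matrix (Fin D) (Fin D) ℝ) (cb : ℕ → Fin D → ℝ),
        V 1 = W 1 ω → cb 1 = b1 →
        ∃ x : Fin D → ℝ, fnn V cb L x ≠ reluVec (Wbar1.mulVec x + bbar1) := by
  classical
  have h1L : (1 : ℕ) ≤ L := by omega
  have h1mem : (1 : ℕ) ∈ Finset.Icc 1 L := by simp [Finset.mem_Icc, h1L]
  -- the determinant of the frozen first layer is a.s. nonzero
  have hdet0 : μ {ω | (W 1 ω).det = 0} = 0 := by
    have hmn := minor_null μ W h1L hmeas hindep habs D (le_refl D)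
    have hsub : ∀ M : Matrix (Fin D) (Fin D) ℝ,
        M.submatrix (Fin.castLE (le_refl D)) (Fin.castLE (le_refl D)) = M := by
      intro M; ext a b; rfl
    simpa [hsub] using hmn
  -- choose witnesses of nonzero entries in each row of Wbar1
  have hrow : ∀ k : Fin D, ∃ a, Wbar1 k a ≠ 0 := by
    intro k
    by_contra hno
    push_neg at hno
    exact hWbar1 (Matrix.det_eq_zero_of_row_eq_zero k hno)
  choose aF haF using hrow
  set i0 : Fin D := ⟨0, by omega⟩ with hi0
  set i1 : Fin D := ⟨1, by omega⟩ with hi1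
  set bF : Fin D → Fin D := fun k => if aF k = i0 then i1 else i0 with hbF
  have hbne : ∀ k, bF k ≠ aF k := by
    intro k
    by_cases h : aF k = i0
    · rw [hbF]
      simp only [if_pos h, h]
      simp [hi0, hi1, Fin.ext_iff]
    · rw [hbF]
      simp only [if_neg h]
      intro heq
      exact h heq.symm
  -- the parallel events are null
  set Epar : Fin D → Fin D → Set Ω := fun i k =>
    {ω | Wbar1 k (aF k) * W 1 ω i (bF k) = Wbar1 k (bF k) * W 1 ω i (aF k)} with hEpar
  have hEnull : ∀ i k, μ (Epar i k) = 0 := by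
    intro i k
    set X : Ω → ℝ := entFamW (L := L) W (⟨1, h1mem⟩, i, bF k) with hX
    set V : Ω → ℝ := entFamW (L := L) W (⟨1, h1mem⟩, i, aF k) with hV
    have hne : ((⟨1, h1mem⟩, i, bF k) : {l // l ∈ Finset.Icc 1 L} × Fin D × Fin D)
        ≠ (⟨1, h1mem⟩, i, aF k) := by
      intro hq
      exact hbne k (congrArg (fun q => q.2.2) hq)
    have hXV : IndepFun X V μ := hindep.indepFun hne
    set s : Set (ℝ × ℝ) := {p | Wbar1 k (aF k) * p.1 = Wbar1 k (bF k) * p.2} with hs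
    have hsm : MeasurableSet s := by
      have : s = (fun p : ℝ × ℝ => Wbar1 k (aF k) * p.1 - Wbar1 k (bF k) * p.2) ⁻¹' {0} := by
        ext p
        simp [hs, sub_eq_zero]
      rw [this]
      exact ((measurable_fst.const_mul _).sub (measurable_snd.const_mul _))
        (MeasurableSet.singleton 0)
    have hslice : ∀ v, (volume : Measure ℝ) {x | (x, v) ∈ s} = 0 := by
      intro v
      refine measure_mono_null ?_ (measure_singleton (Wbar1 k (bF k) * v / Wbar1 k (aF k)))
      intro x hx
      simp only [hs, Set.mem_setOf_eq] at hx
      have : x = Wbar1 k (bF k) * v / Wbar1 k (aF k) := by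
        field_simp [haF k]
        linarith [hx]
      simp [this]
    have := slice_null μ X V (hmeas _) (hmeas _) hXV (habs _) s hsm hslice
    exact this
  -- combine the null events
  have hbad : μ ({ω | (W 1 ω).det = 0} ∪ ⋃ i, ⋃ k, Epar i k) = 0 :=
    measure_union_null hdet0
      (measure_iUnion_null fun i => measure_iUnion_null fun k => hEnull i k)
  have hae := measure_eq_zero_iff_ae_notMem.mp hbad
  filter_upwards [hae] with ω hω
  intro V cb hV1 hcb1
  have hdet : (W 1 ω).det ≠ 0 := by
    intro h
    exact hω (Or.inl h)
  have hparm : ∀ i k, ω ∉ Epar i k := by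
    intro i k hmem
    exact hω (Or.inr (Set.mem_iUnion.mpr ⟨i, Set.mem_iUnion.mpr ⟨k, hmem⟩⟩))
  have hpar : ∀ i k : Fin D, ∃ d : Fin D → ℝ,
      ((W 1 ω).mulVec d) i = 0 ∧ (Wbar1.mulVec d) k ≠ 0 := by
    intro i k
    set A := W 1 ω with hA
    have hmin : Wbar1 k (aF k) * A i (bF k) ≠ Wbar1 k (bF k) * A i (aF k) := by
      intro h
      exact hparm i k h
    refine ⟨A i (bF k) • (Pi.single (aF k) (1:ℝ) : Fin D → ℝ)
      - A i (aF k) • (Pi.single (bF k) (1:ℝ) : Fin D → ℝ), ?_, ?_⟩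
    · rw [Matrix.mulVec_sub, Matrix.mulVec_smul, Matrix.mulVec_smul,
        Matrix.mulVec_single, Matrix.mulVec_single]
      simp only [Pi.sub_apply, Pi.smul_apply, smul_eq_mul, mul_one, MulOpposite.op_one, one_smul, Matrix.col_apply]
      ring
    · rw [Matrix.mulVec_sub, Matrix.mulVec_smul, Matrix.mulVec_smul,
        Matrix.mulVec_single, Matrix.mulVec_single]
      simp only [Pi.sub_apply, Pi.smul_apply, smul_eq_mul, mul_one, MulOpposite.op_one, one_smul, Matrix.col_apply]
      intro h
      apply hmin
      linarith [h]
  exact det_core hD hL Wbar1 hWbar1 bbar1 (W 1 ω) hdet b1 hpar V cb hV1 hcb1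


end
end
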